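/- arXiv:1701.03114 — 5 statements merged into one kernel-verified Lean document; each statement's English description precedes it below -/
import Mathlib

section
/- For any real x ≥ 1, the standard normal CDF satisfies ln Φ(−x) ≥ −x²/2 − ln(√(8π)·x), where Φ(a) = ∫_{−∞}^a (1/√(2π)) e^{−t²/2} dt. -/
open MeasureTheory Real Set Filter Topology

/-- The cumulative distribution function of the standard normal distribution. -/
noncomputable def stdNormalCDF (a : ℝ) : ℝ :=
  ∫ t in Set.Iic a, (Real.sqrt (2 * Real.pi))⁻¹ * Real.exp (-t ^ 2 / 2)

private noncomputable def Gfun (t : ℝ) : ℝ := -t / (t ^ 2 + 1) * Real.exp (-t ^ 2 / 2)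

private noncomputable def gfun (t : ℝ) : ℝ :=
  (t ^ 4 + 2 * t ^ 2 - 1) / (t ^ 2 + 1) ^ 2 * Real.exp (-t ^ 2 / 2)

private lemma hasDerivAt_Gfun (t : ℝ) : HasDerivAt Gfun (gfun t) t := by
  have hden : (t ^ 2 + 1) ≠ 0 := by positivity
  have h1 : HasDerivAt (fun t : ℝ => -t / (t ^ 2 + 1))
      ((-1 * (t ^ 2 + 1) - (-t) * (2 * t)) / (t ^ 2 + 1) ^ 2) t := by
    have hu : HasDerivAt (fun t : ℝ => -t) (-1) t := (hasDerivAt_id t).neg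
    have hv : HasDerivAt (fun t : ℝ => t ^ 2 + 1) (2 * t) t := by
      simpa using (hasDerivAt_pow 2 t).add_const 1
    exact hu.div hv hden
  have h2 : HasDerivAt (fun t : ℝ => Real.exp (-t ^ 2 / 2)) (-t * Real.exp (-t ^ 2 / 2)) t := by
    have h3 : HasDerivAt (fun t : ℝ => -t ^ 2 / 2) (-t) t := by
      have := ((hasDerivAt_pow 2 t).neg).div_const 2
      simpa [pow_one] using this.congr_deriv (by ring)
    simpa [mul_comm] using h3.exp
  have := h1.mul h2
  apply this.congr_deriv
  unfold gfun
  field_simp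
  ring

private lemma gfun_le (t : ℝ) : gfun t ≤ Real.exp (-t ^ 2 / 2) := by
  unfold gfun
  rw [div_mul_eq_mul_div, div_le_iff₀ (by positivity)]
  have := Real.exp_pos (-t ^ 2 / 2)
  nlinarith [sq_nonneg t, sq_nonneg (t^2)]

private lemma abs_gfun_le (t : ℝ) : |gfun t| ≤ Real.exp (-t ^ 2 / 2) := by
  unfold gfun
  rw [abs_mul, abs_div, Real.abs_exp, abs_of_pos (by positivity : (0:ℝ) < (t ^ 2 + 1) ^ 2)]
  rw [div_mul_eq_mul_div, div_le_iff₀ (by positivity)]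
  have he := Real.exp_pos (-t ^ 2 / 2)
  rcases abs_cases (t ^ 4 + 2 * t ^ 2 - 1) with ⟨h, _⟩ | ⟨h, _⟩ <;> rw [h] <;>
    nlinarith [sq_nonneg t, sq_nonneg (t^2)]

private lemma exp_sq_tendsto : Tendsto (fun t : ℝ => Real.exp (-t ^ 2 / 2)) atBot (𝓝 0) := by
  apply Real.tendsto_exp_atBot.comp
  have h : Tendsto (fun t : ℝ => t ^ 2) atBot atTop := by
    have heq : (fun t : ℝ => t ^ 2) = (fun s : ℝ => s ^ 2) ∘ (fun t : ℝ => -t) := by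
      ext t; simp
    rw [heq]
    exact (tendsto_pow_atTop two_ne_zero).comp tendsto_neg_atBot_atTop
  exact (tendsto_neg_atTop_atBot.comp h).atBot_div_const (by norm_num)

private lemma Gfun_tendsto : Tendsto Gfun atBot (𝓝 0) := by
  apply squeeze_zero_norm _ exp_sq_tendsto
  intro t
  unfold Gfun
  rw [norm_mul, norm_div, Real.norm_eq_abs, Real.norm_eq_abs, Real.norm_eq_abs, Real.abs_exp,
    abs_of_pos (by positivity : (0:ℝ) < t ^ 2 + 1)]
  have he := Real.exp_pos (-t ^ 2 / 2)
  rw [div_mul_eq_mul_div, div_le_iff₀ (by positivity)]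
  rcases abs_cases (-t) with ⟨h, _⟩ | ⟨h, _⟩ <;> rw [h] <;> nlinarith [sq_nonneg (t+1), sq_nonneg (t-1)]

private lemma gauss_integrable : Integrable (fun t : ℝ => Real.exp (-t ^ 2 / 2)) := by
  have : (fun t : ℝ => Real.exp (-t ^ 2 / 2)) = fun t : ℝ => Real.exp (-(1/2) * t ^ 2) := by
    ext t; ring_nf
  rw [this]
  exact integrable_exp_neg_mul_sq (by norm_num)

/-- For any real `x ≥ 1`, `ln Φ(−x) ≥ −x²/2 − ln(√(8π)·x)`. -/
theorem log_stdNormalCDF_neg_ge (x : ℝ) (hx : 1 ≤ x) :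
    Real.log (stdNormalCDF (-x)) ≥ -x ^ 2 / 2 - Real.log (Real.sqrt (8 * Real.pi) * x) := by
  have hx0 : 0 < x := lt_of_lt_of_le one_pos hx
  have hfint : IntegrableOn (fun t : ℝ => Real.exp (-t ^ 2 / 2)) (Iic (-x)) :=
    gauss_integrable.integrableOn
  have hgcont : Continuous gfun := by
    unfold gfun
    fun_prop (disch := intro t; positivity)
  have hgint : IntegrableOn gfun (Iic (-x)) := by
    refine (gauss_integrable.mono hgcont.aestronglyMeasurable ?_).integrableOn
    filter_upwards with t
    rw [Real.norm_eq_abs, Real.norm_eq_abs, Real.abs_exp]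
    exact abs_gfun_le t
  have hFTC : ∫ t in Iic (-x), gfun t = Gfun (-x) - 0 :=
    integral_Iic_of_hasDerivAt_of_tendsto' (fun t _ => hasDerivAt_Gfun t) hgint Gfun_tendsto
  have hmono : ∫ t in Iic (-x), gfun t ≤ ∫ t in Iic (-x), Real.exp (-t ^ 2 / 2) :=
    setIntegral_mono_on hgint hfint measurableSet_Iic (fun t _ => gfun_le t)
  have hI : Real.exp (-x ^ 2 / 2) / (2 * x) ≤ ∫ t in Iic (-x), Real.exp (-t ^ 2 / 2) := by
    refine le_trans ?_ (hFTC ▸ hmono)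
    unfold Gfun
    rw [sub_zero]
    have he := Real.exp_pos (-x ^ 2 / 2)
    have hxx : (-x) ^ 2 = x ^ 2 := by ring
    rw [hxx, neg_neg, div_mul_eq_mul_div, div_le_div_iff₀ (by positivity) (by positivity)]
    have hx2 : 1 ≤ x ^ 2 := by nlinarith
    nlinarith [mul_nonneg he.le (sub_nonneg.mpr hx2)]
  have hsqrt : Real.sqrt (8 * Real.pi) = 2 * Real.sqrt (2 * Real.pi) := by
    rw [show (8 : ℝ) * Real.pi = 2 ^ 2 * (2 * Real.pi) by ring, Real.sqrt_mul (by positivity),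
      Real.sqrt_sq (by norm_num)]
  have hspos : 0 < Real.sqrt (2 * Real.pi) := Real.sqrt_pos.mpr (by positivity)
  have hstd : Real.exp (-x ^ 2 / 2) / (Real.sqrt (8 * Real.pi) * x) ≤ stdNormalCDF (-x) := by
    unfold stdNormalCDF
    rw [MeasureTheory.integral_const_mul]
    rw [hsqrt]
    calc Real.exp (-x ^ 2 / 2) / (2 * Real.sqrt (2 * Real.pi) * x)
        = (Real.sqrt (2 * Real.pi))⁻¹ * (Real.exp (-x ^ 2 / 2) / (2 * x)) := by
          field_simp
      _ ≤ _ := by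
          exact mul_le_mul_of_nonneg_left hI (by positivity)
  have hLpos : 0 < Real.exp (-x ^ 2 / 2) / (Real.sqrt (8 * Real.pi) * x) := by
    have : 0 < Real.sqrt (8 * Real.pi) := Real.sqrt_pos.mpr (by positivity)
    positivity
  have := Real.log_le_log hLpos hstd
  rw [Real.log_div (Real.exp_ne_zero _) (by positivity), Real.log_exp] at this
  · exact this
end

section
/- Let ρ and σ be density matrices on a finite-dimensional Hilbert space with eigendecompositions ρ = Σ_a r_a |φ_a⟩⟨φ_a| and σ = Σ_b s_b |ψ_b⟩⟨ψ_b|. Define the Nussbaum–Szkoła distributions P(a,b) := r_a|⟨φ_a|ψ_b⟩|² and Q(a,b) := s_b|⟨φ_a|ψ_b⟩|². Then P and Q are probability distributions, and D(P‖Q) = D(ρ‖σ), where D(ρ‖σ) := Tr ρ(log ρ − log σ) is the quantum relative entropy (assuming supp ρ ⊆ supp σ) and D(P‖Q) is the classical Kullback–Leibler divergence. -/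
open Matrix Finset
open scoped ComplexOrder InnerProductSpace

variable {ι : Type*} [Fintype ι] [DecidableEq ι]

/-- Matrix logarithm of a Hermitian matrix via the spectral decomposition
(junk value `0` on non-Hermitian matrices). -/
noncomputable def matLog (A : Matrix ι ι ℂ) : Matrix ι ι ℂ :=
  if hA : A.IsHermitian then
    (hA.eigenvectorUnitary : Matrix ι ι ℂ) *
      Matrix.diagonal (fun i => (Real.log (hA.eigenvalues i) : ℂ)) *
      (star (hA.eigenvectorUnitary : Matrix ι ι ℂ))
  else 0

/-- Quantum relative entropy `D(ρ‖σ) = Tr ρ (log ρ − log σ)`. -/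
noncomputable def qRelEnt (ρ σ : Matrix ι ι ℂ) : ℝ :=
  ((ρ * (matLog ρ - matLog σ)).trace).re

/-- Classical Kullback–Leibler divergence `D(P‖Q) = ∑ₓ P x · log (P x / Q x)`,
with the convention `0 · log 0 = 0`. -/
noncomputable def klDiv {α : Type*} [Fintype α] (P Q : α → ℝ) : ℝ :=
  ∑ x, if P x = 0 then 0 else P x * Real.log (P x / Q x)

section Aux

lemma conj_diag_pow (W : Matrix ι ι ℂ) (hW : Wᴴ * W = 1) (e : ι → ℂ) (k : ℕ) :
    (W * Matrix.diagonal e * Wᴴ) ^ k = W * Matrix.diagonal (fun i => e i ^ k) * Wᴴ := by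
  have hW' : W * Wᴴ = 1 := mul_eq_one_comm.mp hW
  induction k with
  | zero => simp [Matrix.diagonal_one, hW']
  | succ k ih =>
      rw [pow_succ, ih]
      calc (W * Matrix.diagonal (fun i => e i ^ k) * Wᴴ) * (W * Matrix.diagonal e * Wᴴ)
          = W * Matrix.diagonal (fun i => e i ^ k) * (Wᴴ * W) * Matrix.diagonal e * Wᴴ := by
            simp only [mul_assoc]
        _ = W * Matrix.diagonal (fun i => e i ^ (k+1)) * Wᴴ := by
            rw [hW, mul_one, mul_assoc W, Matrix.diagonal_mul_diagonal]
            simp [pow_succ]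

lemma aeval_conj_diag (W : Matrix ι ι ℂ) (hW : Wᴴ * W = 1) (e : ι → ℂ) (q : Polynomial ℂ) :
    Polynomial.aeval (W * Matrix.diagonal e * Wᴴ) q
      = W * Matrix.diagonal (fun i => q.eval (e i)) * Wᴴ := by
  induction q using Polynomial.induction_on' with
  | add p q hp hq =>
      have : Matrix.diagonal (fun i => (p + q).eval (e i))
          = Matrix.diagonal (fun i => p.eval (e i)) + Matrix.diagonal (fun i => q.eval (e i)) := by
        rw [Matrix.diagonal_add]; funext i; simp
      rw [map_add, hp, hq, this, Matrix.mul_add, Matrix.add_mul]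
  | monomial k a =>
      rw [Polynomial.aeval_monomial, conj_diag_pow W hW]
      have : Matrix.diagonal (fun i => (Polynomial.monomial k a).eval (e i))
          = a • Matrix.diagonal (fun i => e i ^ k) := by
        ext i j
        rcases eq_or_ne i j with h | h <;>
          simp [Matrix.diagonal_apply, h, Polynomial.eval_monomial, Matrix.smul_apply]
      rw [this]
      simp [Algebra.algebraMap_eq_smul_one, Matrix.smul_mul, Matrix.mul_smul]

lemma matLog_conj_diag (W : Matrix ι ι ℂ) (hW : Wᴴ * W = 1) (c : ι → ℝ) :
    matLog (W * Matrix.diagonal (fun a => (c a : ℂ)) * Wᴴ)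
      = W * Matrix.diagonal (fun a => (Real.log (c a) : ℂ)) * Wᴴ := by
  have hdiag : Matrix.IsHermitian (Matrix.diagonal (fun a => ((c a : ℝ) : ℂ))) := by
    apply Matrix.isHermitian_diagonal_of_self_adjoint
    funext a
    simp [Pi.star_apply, Complex.star_def, Complex.conj_ofReal]
  have hA : (W * Matrix.diagonal (fun a => ((c a : ℝ) : ℂ)) * Wᴴ).IsHermitian :=
    Matrix.isHermitian_mul_mul_conjTranspose W hdiag
  set A := W * Matrix.diagonal (fun a => (c a : ℂ)) * Wᴴ with hAdef
  set V : Matrix ι ι ℂ := (hA.eigenvectorUnitary : Matrix ι ι ℂ) with hVdef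
  have hVmem := hA.eigenvectorUnitary.2
  have hV1 : star V * V = 1 := hVmem.1
  have hV : Vᴴ * V = 1 := by rwa [Matrix.star_eq_conjTranspose] at hV1
  have spec : A = V * Matrix.diagonal (fun i => ((hA.eigenvalues i : ℝ) : ℂ)) * Vᴴ := by
    have h := hA.spectral_theorem
    rw [Unitary.conjStarAlgAut_apply, Matrix.star_eq_conjTranspose] at h
    exact h
  set T : Finset ℝ := (Finset.univ.image hA.eigenvalues) ∪ (Finset.univ.image c) with hT
  set p : Polynomial ℝ := Lagrange.interpolate T id Real.log with hpdef
  have hp : ∀ x ∈ T, p.eval x = Real.log x := fun x hx =>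
    Lagrange.eval_interpolate_at_node Real.log (Set.injOn_id _) hx
  set q : Polynomial ℂ := p.map (algebraMap ℝ ℂ) with hqdef
  have hq : ∀ x : ℝ, q.eval ((x : ℝ) : ℂ) = ((p.eval x : ℝ) : ℂ) := by
    intro x
    rw [hqdef, Polynomial.eval_map]
    exact Polynomial.eval₂_at_apply (algebraMap ℝ ℂ) x
  have key1 : Polynomial.aeval A q
      = V * Matrix.diagonal (fun i => (Real.log (hA.eigenvalues i) : ℂ)) * Vᴴ := by
    conv_lhs => rw [spec]
    rw [aeval_conj_diag V hV]
    have hfun : (fun i => q.eval ((hA.eigenvalues i : ℝ) : ℂ))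
        = fun i => ((Real.log (hA.eigenvalues i) : ℝ) : ℂ) := by
      funext i
      rw [hq, hp _ (Finset.mem_union_left _ (Finset.mem_image_of_mem _ (Finset.mem_univ i)))]
    rw [hfun]
  have key2 : Polynomial.aeval A q
      = W * Matrix.diagonal (fun a => (Real.log (c a) : ℂ)) * Wᴴ := by
    conv_lhs => rw [hAdef]
    rw [aeval_conj_diag W hW]
    have hfun : (fun i => q.eval ((c i : ℝ) : ℂ))
        = fun a => ((Real.log (c a) : ℝ) : ℂ) := by
      funext a
      rw [hq, hp _ (Finset.mem_union_right _ (Finset.mem_image_of_mem _ (Finset.mem_univ a)))]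
    rw [hfun]
  show matLog A = _
  unfold matLog
  rw [dif_pos hA, ← hVdef, Matrix.star_eq_conjTranspose, ← key1, key2]

lemma trace_conj_pair (W1 W2 : Matrix ι ι ℂ) (x y : ι → ℂ) :
    ((W1 * Matrix.diagonal x * W1ᴴ) * (W2 * Matrix.diagonal y * W2ᴴ)).trace
    = ∑ a, ∑ b, x a * y b * ((W1ᴴ * W2) a b * (starRingEnd ℂ) ((W1ᴴ * W2) a b)) := by
  have h : (W1 * Matrix.diagonal x * W1ᴴ) * (W2 * Matrix.diagonal y * W2ᴴ)
      = W1 * (Matrix.diagonal x * (W1ᴴ * W2) * Matrix.diagonal y * W2ᴴ) := by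
    simp only [mul_assoc]
  rw [h, Matrix.trace_mul_comm]
  have h2 : (Matrix.diagonal x * (W1ᴴ * W2) * Matrix.diagonal y * W2ᴴ) * W1
      = Matrix.diagonal x * (W1ᴴ * W2) * Matrix.diagonal y * (W1ᴴ * W2)ᴴ := by
    rw [Matrix.conjTranspose_mul, Matrix.conjTranspose_conjTranspose, mul_assoc]
  rw [h2]
  set C := W1ᴴ * W2 with hC
  rw [Matrix.trace]
  simp only [Matrix.diag_apply, Matrix.mul_apply, Matrix.diagonal_apply,
    Matrix.conjTranspose_apply, ite_mul, mul_ite, zero_mul, mul_zero,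
    Finset.sum_ite_eq, Finset.sum_ite_eq', Finset.mem_univ, if_true]
  refine Finset.sum_congr rfl fun a _ => ?_
  refine Finset.sum_congr rfl fun b _ => ?_
  simp only [starRingEnd_apply]
  ring

end Aux

/-- Nussbaum–Szkoła distributions (Lemma 3.5 of the paper): given eigendecompositions
`ρ = ∑ₐ rₐ |φₐ⟩⟨φₐ|` and `σ = ∑_b s_b |ψ_b⟩⟨ψ_b|` of density matrices with
`supp ρ ⊆ supp σ`, the distributions `P(a,b) = rₐ |⟨φₐ|ψ_b⟩|²` and
`Q(a,b) = s_b |⟨φₐ|ψ_b⟩|²` are probability distributions and their classical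
relative entropy equals the quantum relative entropy: `D(P‖Q) = D(ρ‖σ)`. -/
theorem nussbaum_szkola_relEnt (d : ℕ) (hd : 0 < d)
    (r s : Fin d → ℝ) (hr : ∀ a, 0 ≤ r a) (hs : ∀ b, 0 ≤ s b)
    (hr1 : ∑ a, r a = 1) (hs1 : ∑ b, s b = 1)
    (φ ψ : OrthonormalBasis (Fin d) ℂ (EuclideanSpace ℂ (Fin d)))
    (ρ σ : Matrix (Fin d) (Fin d) ℂ)
    (hρ : ρ = fun i j => ∑ a, (r a : ℂ) * φ a i * (starRingEnd ℂ) (φ a j))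
    (hσ : σ = fun i j => ∑ b, (s b : ℂ) * ψ b i * (starRingEnd ℂ) (ψ b j))
    (hsupp : ∀ v : Fin d → ℂ, σ.mulVec v = 0 → ρ.mulVec v = 0)
    (P Q : Fin d × Fin d → ℝ)
    (hP : P = fun x => r x.1 * ‖⟪φ x.1, ψ x.2⟫_ℂ‖ ^ 2)
    (hQ : Q = fun x => s x.2 * ‖⟪φ x.1, ψ x.2⟫_ℂ‖ ^ 2) :
    (∑ x, P x = 1) ∧ (∑ x, Q x = 1) ∧ klDiv P Q = qRelEnt ρ σ := by
  classical
  -- inner products as sums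
  have hinnφψ : ∀ a b, ⟪φ a, ψ b⟫_ℂ = ∑ i, (starRingEnd ℂ) (φ a i) * ψ b i := by
    intro a b; simp [PiLp.inner_apply, RCLike.inner_apply, mul_comm]
  have horthφ : ∀ a b, (∑ i, (starRingEnd ℂ) (φ a i) * φ b i) = if a = b then 1 else 0 := by
    intro a b
    have h := orthonormal_iff_ite.mp φ.orthonormal a b
    simpa [PiLp.inner_apply, RCLike.inner_apply, mul_comm] using h
  have horthψ : ∀ a b, (∑ i, (starRingEnd ℂ) (ψ a i) * ψ b i) = if a = b then 1 else 0 := by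
    intro a b
    have h := orthonormal_iff_ite.mp ψ.orthonormal a b
    simpa [PiLp.inner_apply, RCLike.inner_apply, mul_comm] using h
  -- Parseval
  have hPar1 : ∀ a, ∑ b, ‖⟪φ a, ψ b⟫_ℂ‖ ^ 2 = 1 := by
    intro a
    have h : ((∑ b, ‖⟪φ a, ψ b⟫_ℂ‖ ^ 2 : ℝ) : ℂ) = ((1 : ℝ) : ℂ) := by
      push_cast
      calc ∑ b, ((‖⟪φ a, ψ b⟫_ℂ‖ : ℂ)) ^ 2
          = ∑ b, ⟪φ a, ψ b⟫_ℂ * ⟪ψ b, φ a⟫_ℂ := by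
            refine Finset.sum_congr rfl fun b _ => ?_
            rw [← inner_conj_symm (ψ b) (φ a), RCLike.mul_conj]
            norm_num [RCLike.ofReal_alg]
        _ = ⟪φ a, φ a⟫_ℂ := ψ.sum_inner_mul_inner (φ a) (φ a)
        _ = 1 := by
            rw [inner_self_eq_norm_sq_to_K, φ.orthonormal.1 a]
            norm_num
    exact_mod_cast h
  have hPar2 : ∀ b, ∑ a, ‖⟪φ a, ψ b⟫_ℂ‖ ^ 2 = 1 := by
    intro b
    have h : ((∑ a, ‖⟪φ a, ψ b⟫_ℂ‖ ^ 2 : ℝ) : ℂ) = ((1 : ℝ) : ℂ) := by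
      push_cast
      calc ∑ a, ((‖⟪φ a, ψ b⟫_ℂ‖ : ℂ)) ^ 2
          = ∑ a, ⟪ψ b, φ a⟫_ℂ * ⟪φ a, ψ b⟫_ℂ := by
            refine Finset.sum_congr rfl fun a _ => ?_
            rw [← inner_conj_symm (ψ b) (φ a), RCLike.conj_mul]
            norm_num [RCLike.ofReal_alg]
        _ = ⟪ψ b, ψ b⟫_ℂ := φ.sum_inner_mul_inner (ψ b) (ψ b)
        _ = 1 := by
            rw [inner_self_eq_norm_sq_to_K, ψ.orthonormal.1 b]
            norm_num
    exact_mod_cast h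
  -- part 1
  have hPsum : ∑ x, P x = 1 := by
    rw [hP, Fintype.sum_prod_type]
    calc ∑ a, ∑ b, r a * ‖⟪φ a, ψ b⟫_ℂ‖ ^ 2
        = ∑ a, r a * ∑ b, ‖⟪φ a, ψ b⟫_ℂ‖ ^ 2 := by
          refine Finset.sum_congr rfl fun a _ => ?_; rw [Finset.mul_sum]
      _ = ∑ a, r a := by
          refine Finset.sum_congr rfl fun a _ => ?_; rw [hPar1 a, mul_one]
      _ = 1 := hr1
  have hQsum : ∑ x, Q x = 1 := by
    rw [hQ, Fintype.sum_prod_type_right]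
    calc ∑ b, ∑ a, s b * ‖⟪φ a, ψ b⟫_ℂ‖ ^ 2
        = ∑ b, s b * ∑ a, ‖⟪φ a, ψ b⟫_ℂ‖ ^ 2 := by
          refine Finset.sum_congr rfl fun b _ => ?_; rw [Finset.mul_sum]
      _ = ∑ b, s b := by
          refine Finset.sum_congr rfl fun b _ => ?_; rw [hPar2 b, mul_one]
      _ = 1 := hs1
  refine ⟨hPsum, hQsum, ?_⟩
  -- matrix forms
  set Wφ : Matrix (Fin d) (Fin d) ℂ := Matrix.of (fun i a => φ a i) with hWφdef
  set Wψ : Matrix (Fin d) (Fin d) ℂ := Matrix.of (fun i a => ψ a i) with hWψdef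
  have hWφ1 : Wφᴴ * Wφ = 1 := by
    ext a b
    rw [Matrix.mul_apply]
    simp only [Matrix.conjTranspose_apply, Matrix.of_apply, Matrix.one_apply, Complex.star_def,
      hWφdef]
    rw [horthφ a b]
  have hWψ1 : Wψᴴ * Wψ = 1 := by
    ext a b
    rw [Matrix.mul_apply]
    simp only [Matrix.conjTranspose_apply, Matrix.of_apply, Matrix.one_apply, Complex.star_def,
      hWψdef]
    rw [horthψ a b]
  have hρW : ρ = Wφ * Matrix.diagonal (fun a => (r a : ℂ)) * Wφᴴ := by
    rw [hρ]
    ext i j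
    rw [mul_assoc, Matrix.mul_apply]
    simp only [Matrix.diagonal_mul, Matrix.conjTranspose_apply, Matrix.of_apply, Complex.star_def,
      hWφdef]
    refine Finset.sum_congr rfl fun a _ => by ring
  have hσW : σ = Wψ * Matrix.diagonal (fun b => (s b : ℂ)) * Wψᴴ := by
    rw [hσ]
    ext i j
    rw [mul_assoc, Matrix.mul_apply]
    simp only [Matrix.diagonal_mul, Matrix.conjTranspose_apply, Matrix.of_apply, Complex.star_def,
      hWψdef]
    refine Finset.sum_congr rfl fun b _ => by ring
  have hLρ : matLog ρ = Wφ * Matrix.diagonal (fun a => (Real.log (r a) : ℂ)) * Wφᴴ := by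
    rw [hρW]; exact matLog_conj_diag Wφ hWφ1 r
  have hLσ : matLog σ = Wψ * Matrix.diagonal (fun b => (Real.log (s b) : ℂ)) * Wψᴴ := by
    rw [hσW]; exact matLog_conj_diag Wψ hWψ1 s
  have hCφψ : ∀ a b, (Wφᴴ * Wψ) a b = ⟪φ a, ψ b⟫_ℂ := by
    intro a b
    rw [Matrix.mul_apply, hinnφψ]
    simp [Matrix.conjTranspose_apply, Matrix.of_apply, Complex.star_def, hWφdef, hWψdef]
  -- quantum traces
  have hT1 : ((Wφ * Matrix.diagonal (fun a => (r a : ℂ)) * Wφᴴ) *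
      (Wφ * Matrix.diagonal (fun a => (Real.log (r a) : ℂ)) * Wφᴴ)).trace
      = ((∑ a, r a * Real.log (r a) : ℝ) : ℂ) := by
    rw [trace_conj_pair, hWφ1]
    push_cast
    simp [Matrix.one_apply, apply_ite (starRingEnd ℂ), mul_ite, ite_mul,
      Finset.sum_ite_eq', Finset.sum_ite_eq]
  have hT2 : ((Wφ * Matrix.diagonal (fun a => (r a : ℂ)) * Wφᴴ) *
      (Wψ * Matrix.diagonal (fun b => (Real.log (s b) : ℂ)) * Wψᴴ)).trace
      = ((∑ a, ∑ b, r a * Real.log (s b) * ‖⟪φ a, ψ b⟫_ℂ‖ ^ 2 : ℝ) : ℂ) := by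
    rw [trace_conj_pair]
    push_cast
    refine Finset.sum_congr rfl fun a _ => Finset.sum_congr rfl fun b _ => ?_
    rw [hCφψ a b, RCLike.mul_conj]
    norm_num [RCLike.ofReal_alg]
  -- support condition
  have hs0 : ∀ b, s b = 0 → ∀ a, r a * ‖⟪φ a, ψ b⟫_ℂ‖ ^ 2 = 0 := by
    intro b hb
    have hσv : σ.mulVec (fun i => ψ b i) = 0 := by
      funext i
      rw [hσ]
      show ∑ j, (∑ b', (s b' : ℂ) * ψ b' i * (starRingEnd ℂ) (ψ b' j)) * ψ b j = 0
      calc ∑ j, (∑ b', (s b' : ℂ) * ψ b' i * (starRingEnd ℂ) (ψ b' j)) * ψ b j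
          = ∑ b', (s b' : ℂ) * ψ b' i * ∑ j, (starRingEnd ℂ) (ψ b' j) * ψ b j := by
            simp only [Finset.sum_mul]
            rw [Finset.sum_comm]
            refine Finset.sum_congr rfl fun b' _ => ?_
            rw [Finset.mul_sum]
            exact Finset.sum_congr rfl fun j _ => by ring
        _ = 0 := by
            simp only [horthψ]
            simp [Finset.sum_ite_eq', hb]
    have hρv := hsupp _ hσv
    have hexp : ∑ i, (starRingEnd ℂ) (ψ b i) * (ρ.mulVec (fun i => ψ b i)) i
        = ∑ a, (r a : ℂ) * ((starRingEnd ℂ) (⟪φ a, ψ b⟫_ℂ) * ⟪φ a, ψ b⟫_ℂ) := by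
      rw [hρ]
      show ∑ i, (starRingEnd ℂ) (ψ b i) *
          (∑ j, (∑ a, (r a : ℂ) * φ a i * (starRingEnd ℂ) (φ a j)) * ψ b j) = _
      calc ∑ i, (starRingEnd ℂ) (ψ b i) *
            (∑ j, (∑ a, (r a : ℂ) * φ a i * (starRingEnd ℂ) (φ a j)) * ψ b j)
          = ∑ i, (starRingEnd ℂ) (ψ b i) *
            (∑ a, (r a : ℂ) * φ a i * ∑ j, (starRingEnd ℂ) (φ a j) * ψ b j) := by
            refine Finset.sum_congr rfl fun i _ => ?_
            congr 1
            simp only [Finset.sum_mul]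
            rw [Finset.sum_comm]
            refine Finset.sum_congr rfl fun a _ => ?_
            rw [Finset.mul_sum]
            exact Finset.sum_congr rfl fun j _ => by ring
        _ = ∑ a, (r a : ℂ) *
              ((∑ i, (starRingEnd ℂ) (ψ b i) * φ a i) * (∑ j, (starRingEnd ℂ) (φ a j) * ψ b j)) := by
            simp only [Finset.mul_sum, Finset.sum_mul]
            rw [Finset.sum_comm]
            refine Finset.sum_congr rfl fun a _ => ?_
            rw [Finset.sum_comm]
            exact Finset.sum_congr rfl fun i _ => Finset.sum_congr rfl fun j _ => by ring
        _ = ∑ a, (r a : ℂ) * ((starRingEnd ℂ) (⟪φ a, ψ b⟫_ℂ) * ⟪φ a, ψ b⟫_ℂ) := by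
            refine Finset.sum_congr rfl fun a _ => ?_
            rw [hinnφψ]
            congr 2
            rw [map_sum]
            refine Finset.sum_congr rfl fun i _ => ?_
            simp [mul_comm]
    have hz : ∑ a, (r a : ℂ) * ((starRingEnd ℂ) (⟪φ a, ψ b⟫_ℂ) * ⟪φ a, ψ b⟫_ℂ) = 0 := by
      rw [← hexp, hρv]
      simp
    have hreal : ∑ a, r a * ‖⟪φ a, ψ b⟫_ℂ‖ ^ 2 = 0 := by
      have h : ((∑ a, r a * ‖⟪φ a, ψ b⟫_ℂ‖ ^ 2 : ℝ) : ℂ) = 0 := by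
        push_cast
        rw [← hz]
        refine Finset.sum_congr rfl fun a _ => ?_
        rw [RCLike.conj_mul]
        norm_num [RCLike.ofReal_alg]
      exact_mod_cast h
    intro a
    have hnn : ∀ a ∈ Finset.univ, (0:ℝ) ≤ r a * ‖⟪φ a, ψ b⟫_ℂ‖ ^ 2 :=
      fun a _ => mul_nonneg (hr a) (sq_nonneg _)
    exact (Finset.sum_eq_zero_iff_of_nonneg hnn).mp hreal a (Finset.mem_univ a)
  -- classical side termwise
  have hterm : ∀ a b, (if P (a, b) = 0 then 0 else P (a, b) * Real.log (P (a, b) / Q (a, b)))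
      = r a * Real.log (r a) * ‖⟪φ a, ψ b⟫_ℂ‖ ^ 2
        - r a * Real.log (s b) * ‖⟪φ a, ψ b⟫_ℂ‖ ^ 2 := by
    intro a b
    simp only [hP, hQ]
    by_cases h : r a * ‖⟪φ a, ψ b⟫_ℂ‖ ^ 2 = 0
    · rw [if_pos h]
      have heq : r a * Real.log (r a) * ‖⟪φ a, ψ b⟫_ℂ‖ ^ 2
          - r a * Real.log (s b) * ‖⟪φ a, ψ b⟫_ℂ‖ ^ 2
          = (r a * ‖⟪φ a, ψ b⟫_ℂ‖ ^ 2) * (Real.log (r a) - Real.log (s b)) := by ring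
      rw [heq, h, zero_mul]
    · rw [if_neg h]
      have hra : r a ≠ 0 := fun h0 => h (by rw [h0, zero_mul])
      have hn : ‖⟪φ a, ψ b⟫_ℂ‖ ^ 2 ≠ 0 := fun h0 => h (by rw [h0, mul_zero])
      have hsb : s b ≠ 0 := fun h0 => h (hs0 b h0 a)
      have hq0 : s b * ‖⟪φ a, ψ b⟫_ℂ‖ ^ 2 ≠ 0 := mul_ne_zero hsb hn
      rw [Real.log_div h hq0, Real.log_mul hra hn, Real.log_mul hsb hn]
      ring
  have hKL : klDiv P Q = (∑ a, r a * Real.log (r a))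
      - ∑ a, ∑ b, r a * Real.log (s b) * ‖⟪φ a, ψ b⟫_ℂ‖ ^ 2 := by
    rw [klDiv, Fintype.sum_prod_type]
    calc ∑ a, ∑ b, (if P (a, b) = 0 then 0 else P (a, b) * Real.log (P (a, b) / Q (a, b)))
        = ∑ a, ∑ b, (r a * Real.log (r a) * ‖⟪φ a, ψ b⟫_ℂ‖ ^ 2
            - r a * Real.log (s b) * ‖⟪φ a, ψ b⟫_ℂ‖ ^ 2) := by
          exact Finset.sum_congr rfl fun a _ => Finset.sum_congr rfl fun b _ => hterm a b
      _ = (∑ a, ∑ b, r a * Real.log (r a) * ‖⟪φ a, ψ b⟫_ℂ‖ ^ 2)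
            - ∑ a, ∑ b, r a * Real.log (s b) * ‖⟪φ a, ψ b⟫_ℂ‖ ^ 2 := by
          simp [Finset.sum_sub_distrib]
      _ = (∑ a, r a * Real.log (r a))
            - ∑ a, ∑ b, r a * Real.log (s b) * ‖⟪φ a, ψ b⟫_ℂ‖ ^ 2 := by
          congr 1
          refine Finset.sum_congr rfl fun a _ => ?_
          rw [← Finset.mul_sum, hPar1 a, mul_one]
  -- conclude
  have hQE : qRelEnt ρ σ = (∑ a, r a * Real.log (r a))
      - ∑ a, ∑ b, r a * Real.log (s b) * ‖⟪φ a, ψ b⟫_ℂ‖ ^ 2 := by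
    rw [qRelEnt, Matrix.mul_sub, Matrix.trace_sub]
    rw [hLρ, hLσ]
    conv_lhs => rw [hρW]
    rw [hT1, hT2]
    rw [Complex.sub_re, Complex.ofReal_re, Complex.ofReal_re]
  rw [hKL, hQE]
end

section
/- Let ρ and σ be density matrices on a finite-dimensional Hilbert space with supp ρ ⊆ supp σ, and let P, Q be their Nussbaum–Szkoła distributions. Then the relative entropy variances agree: V(ρ‖σ) = V(P‖Q), where V(ρ‖σ) := Tr ρ(log ρ − log σ − D(ρ‖σ)·id)² and V(P‖Q) is the variance of log(P/Q) under P. -/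
open Matrix Finset
open scoped ComplexOrder InnerProductSpace

variable {ι : Type*} [Fintype ι] [DecidableEq ι]

/-- Quantum relative entropy variance
`V(ρ‖σ) = Tr ρ (log ρ − log σ − D(ρ‖σ)·id)²`. -/
noncomputable def qRelVar (ρ σ : Matrix ι ι ℂ) : ℝ :=
  ((ρ * ((matLog ρ - matLog σ - (qRelEnt ρ σ : ℂ) • 1) *
      (matLog ρ - matLog σ - (qRelEnt ρ σ : ℂ) • 1))).trace).re

/-- Classical relative entropy variance: the variance of `log (P/Q)` under `P`. -/
noncomputable def klVar {α : Type*} [Fintype α] (P Q : α → ℝ) : ℝ :=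
  ∑ x, if P x = 0 then 0 else P x * (Real.log (P x / Q x) - klDiv P Q) ^ 2


lemma conjMul (V : Matrix ι ι ℂ) (hV' : star V * V = 1) (x y : ι → ℂ) :
    (V * Matrix.diagonal x * star V) * (V * Matrix.diagonal y * star V)
      = V * Matrix.diagonal (fun i => x i * y i) * star V := by
  have h : (V * Matrix.diagonal x * star V) * (V * Matrix.diagonal y * star V)
      = V * (Matrix.diagonal x * (star V * V) * Matrix.diagonal y) * star V := by
    simp only [mul_assoc]
  rw [h, hV', mul_one, Matrix.diagonal_mul_diagonal]

lemma conjPow (V : Matrix ι ι ℂ) (hV : V * star V = 1) (hV' : star V * V = 1)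
    (d : ι → ℂ) (n : ℕ) :
    (V * Matrix.diagonal d * star V) ^ n = V * Matrix.diagonal (fun i => d i ^ n) * star V := by
  induction n with
  | zero => simp [hV]
  | succ n ih =>
      rw [pow_succ, ih, conjMul V hV' _ d]
      simp only [← pow_succ]

lemma aevalConj (V : Matrix ι ι ℂ) (hV : V * star V = 1) (hV' : star V * V = 1)
    (d : ι → ℂ) (p : Polynomial ℂ) :
    Polynomial.aeval (V * Matrix.diagonal d * star V) p
      = V * Matrix.diagonal (fun i => Polynomial.eval (d i) p) * star V := by
  induction p using Polynomial.induction_on' with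
  | add p q hp hq =>
      rw [map_add, hp, hq]
      simp only [Polynomial.eval_add]
      rw [show (Matrix.diagonal fun i => Polynomial.eval (d i) p + Polynomial.eval (d i) q)
          = Matrix.diagonal (fun i => Polynomial.eval (d i) p)
            + Matrix.diagonal (fun i => Polynomial.eval (d i) q) from by
        rw [← Matrix.diagonal_add]]
      rw [Matrix.mul_add, Matrix.add_mul]
  | monomial n c =>
      rw [Polynomial.aeval_monomial, conjPow V hV hV', ← Algebra.smul_def]
      have h2 : (fun i => Polynomial.eval (d i) (Polynomial.monomial n c))
          = c • fun i => d i ^ n := by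
        funext i; simp [Polynomial.eval_monomial]
      rw [h2, Matrix.diagonal_smul, Matrix.mul_smul, Matrix.smul_mul]

lemma matLogConj (V : Matrix ι ι ℂ) (hV : V * star V = 1) (hV' : star V * V = 1)
    (lam : ι → ℝ) :
    matLog (V * Matrix.diagonal (fun i => (lam i : ℂ)) * star V)
      = V * Matrix.diagonal (fun i => (Real.log (lam i) : ℂ)) * star V := by
  classical
  set A : Matrix ι ι ℂ := V * Matrix.diagonal (fun i => (lam i : ℂ)) * star V with hAdef
  have hd : (Matrix.diagonal fun i => (lam i : ℂ))ᴴ = Matrix.diagonal fun i => (lam i : ℂ) := by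
    rw [Matrix.diagonal_conjTranspose,
      show (star fun i => ((lam i : ℝ) : ℂ)) = fun i => ((lam i : ℝ) : ℂ) from
        funext fun i => by rw [Pi.star_apply, Complex.star_def, Complex.conj_ofReal]]
  have hA : A.IsHermitian := by
    rw [Matrix.IsHermitian, hAdef]
    simp only [Matrix.star_eq_conjTranspose, Matrix.conjTranspose_mul,
      Matrix.conjTranspose_conjTranspose, hd, mul_assoc]
  rw [matLog, dif_pos hA]
  set U : Matrix ι ι ℂ := (hA.eigenvectorUnitary : Matrix ι ι ℂ) with hUdef
  have hU : U * star U = 1 := Matrix.mem_unitaryGroup_iff.mp hA.eigenvectorUnitary.2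
  have hU' : star U * U = 1 := Matrix.mem_unitaryGroup_iff'.mp hA.eigenvectorUnitary.2
  set μ : ι → ℝ := hA.eigenvalues with hμdef
  have hspec : A = U * Matrix.diagonal (fun i => (μ i : ℂ)) * star U := by
    have := hA.spectral_theorem
    rw [Unitary.conjStarAlgAut_apply] at this
    exact this
  set S : Finset ℝ := (Finset.univ.image lam) ∪ (Finset.univ.image μ) with hSdef
  set q : Polynomial ℝ := Lagrange.interpolate S id Real.log with hqdef
  have hq : ∀ x ∈ S, Polynomial.eval x q = Real.log x := fun x hx =>
    Lagrange.eval_interpolate_at_node Real.log (Set.injOn_id _) hx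
  set p : Polynomial ℂ := q.map (algebraMap ℝ ℂ) with hpdef
  have hp : ∀ x ∈ S, Polynomial.eval (x : ℂ) p = ((Real.log x : ℝ) : ℂ) := by
    intro x hx
    rw [hpdef, Polynomial.eval_map, show ((x : ℝ) : ℂ) = algebraMap ℝ ℂ x from rfl,
      Polynomial.eval₂_at_apply, hq x hx]
    rfl
  have e1 : Polynomial.aeval A p
      = V * Matrix.diagonal (fun i => (Real.log (lam i) : ℂ)) * star V := by
    rw [hAdef, aevalConj V hV hV',
      show (fun i => Polynomial.eval ((lam i : ℂ)) p) = fun i => ((Real.log (lam i) : ℝ) : ℂ) from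
        funext fun i => hp (lam i)
          (Finset.mem_union_left _ (Finset.mem_image_of_mem lam (Finset.mem_univ i)))]
  have e2 : Polynomial.aeval A p
      = U * Matrix.diagonal (fun i => (Real.log (μ i) : ℂ)) * star U := by
    conv_lhs => rw [hspec]
    rw [aevalConj U hU hU',
      show (fun i => Polynomial.eval ((μ i : ℂ)) p) = fun i => ((Real.log (μ i) : ℝ) : ℂ) from
        funext fun i => hp (μ i)
          (Finset.mem_union_right _ (Finset.mem_image_of_mem μ (Finset.mem_univ i)))]
  rw [← e2, e1]

lemma traceConj (V : Matrix ι ι ℂ) (hV' : star V * V = 1) (x : ι → ℂ) :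
    (V * Matrix.diagonal x * star V).trace = ∑ i, x i := by
  rw [Matrix.trace_mul_comm, ← mul_assoc, hV', one_mul, Matrix.trace_diagonal]

lemma traceForm (V W : Matrix ι ι ℂ) (hV : V * star V = 1) (hV' : star V * V = 1)
    (x y : ι → ℂ) :
    ((V * Matrix.diagonal x * star V) * (W * Matrix.diagonal y * star W)).trace
      = ∑ a, ∑ b, x a * y b * ((star V * W) a b * star ((star V * W) a b)) := by
  have h1 : (V * Matrix.diagonal x * star V) * (W * Matrix.diagonal y * star W)
      = V * (Matrix.diagonal x * (star V * W) * Matrix.diagonal y * (star W * V)) * star V := by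
    simp only [mul_assoc, hV, mul_one]
  rw [h1, Matrix.trace_mul_comm, ← mul_assoc, hV', one_mul]
  have h2 : star W * V = star (star V * W) := by
    simp [Matrix.star_eq_conjTranspose, Matrix.conjTranspose_mul]
  rw [h2]
  set U := star V * W with hU
  calc (Matrix.diagonal x * U * Matrix.diagonal y * star U).trace
      = ∑ a, ∑ b, (x a * U a b * y b) * star (U a b) := by
        simp [Matrix.trace, Matrix.diag, Matrix.mul_apply, Matrix.diagonal_apply,
          Matrix.star_apply, ite_mul, zero_mul, Finset.sum_ite_eq, Finset.mem_univ]
    _ = ∑ a, ∑ b, x a * y b * (U a b * star (U a b)) := by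
        refine Finset.sum_congr rfl fun a _ => Finset.sum_congr rfl fun b _ => by ring

lemma conjMulR (V : Matrix ι ι ℂ) (hV' : star V * V = 1) (x y : ι → ℝ) :
    (V * Matrix.diagonal (fun i => ((x i : ℝ) : ℂ)) * star V) *
      (V * Matrix.diagonal (fun i => ((y i : ℝ) : ℂ)) * star V)
      = V * Matrix.diagonal (fun i => ((x i * y i : ℝ) : ℂ)) * star V := by
  rw [conjMul V hV']
  push_cast
  rfl

lemma mul_star_self_eq_normsq (z : ℂ) : z * star z = ((‖z‖^2 : ℝ) : ℂ) := by
  rw [Complex.star_def, Complex.mul_conj, Complex.normSq_eq_norm_sq]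

lemma inner_mul_inner_conj {d : ℕ} (χ ξ : EuclideanSpace ℂ (Fin d)) :
    ⟪χ, ξ⟫_ℂ * ⟪ξ, χ⟫_ℂ = ((‖⟪χ, ξ⟫_ℂ‖^2 : ℝ) : ℂ) := by
  rw [← inner_conj_symm ξ χ]
  exact mul_star_self_eq_normsq _

lemma parseval {d : ℕ} (φ ψ : OrthonormalBasis (Fin d) ℂ (EuclideanSpace ℂ (Fin d)))
    (a : Fin d) : ∑ b, ‖⟪φ a, ψ b⟫_ℂ‖^2 = 1 := by
  have h := ψ.sum_inner_mul_inner (φ a) (φ a)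
  rw [Finset.sum_congr rfl fun b _ => inner_mul_inner_conj (φ a) (ψ b),
    orthonormal_iff_ite.mp φ.orthonormal a a, if_pos rfl] at h
  have h2 : ((∑ b, ‖⟪φ a, ψ b⟫_ℂ‖^2 : ℝ) : ℂ) = ((1 : ℝ) : ℂ) := by
    push_cast
    rw [← h]
    norm_num
  exact_mod_cast h2

lemma mulVec_apply_expand {d : ℕ} (x : Fin d → ℂ)
    (χ : OrthonormalBasis (Fin d) ℂ (EuclideanSpace ℂ (Fin d))) (v : Fin d → ℂ) (i : Fin d) :
    Matrix.mulVec (Matrix.of fun i j => ∑ a, x a * χ a i * (starRingEnd ℂ) (χ a j)) v i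
      = ∑ a, x a * (∑ j, (starRingEnd ℂ) (χ a j) * v j) * χ a i := by
  simp only [Matrix.mulVec, dotProduct, Matrix.of_apply]
  calc ∑ j, (∑ a, x a * χ a i * (starRingEnd ℂ) (χ a j)) * v j
      = ∑ j, ∑ a, x a * χ a i * (starRingEnd ℂ) (χ a j) * v j :=
        Finset.sum_congr rfl fun j _ => Finset.sum_mul _ _ _
    _ = ∑ a, ∑ j, x a * χ a i * (starRingEnd ℂ) (χ a j) * v j := Finset.sum_comm
    _ = ∑ a, x a * (∑ j, (starRingEnd ℂ) (χ a j) * v j) * χ a i := by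
        refine Finset.sum_congr rfl fun a _ => ?_
        rw [Finset.mul_sum, Finset.sum_mul]
        exact Finset.sum_congr rfl fun j _ => by ring

/-- The Nussbaum–Szkoła distributions reproduce the quantum relative entropy
variance: `V(ρ‖σ) = V(P‖Q)`. -/
theorem nussbaum_szkola_relEntVar (d : ℕ) (hd : 0 < d)
    (r s : Fin d → ℝ) (hr : ∀ a, 0 ≤ r a) (hs : ∀ b, 0 ≤ s b)
    (hr1 : ∑ a, r a = 1) (hs1 : ∑ b, s b = 1)
    (φ ψ : OrthonormalBasis (Fin d) ℂ (EuclideanSpace ℂ (Fin d)))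
    (ρ σ : Matrix (Fin d) (Fin d) ℂ)
    (hρ : ρ = fun i j => ∑ a, (r a : ℂ) * φ a i * (starRingEnd ℂ) (φ a j))
    (hσ : σ = fun i j => ∑ b, (s b : ℂ) * ψ b i * (starRingEnd ℂ) (ψ b j))
    (hsupp : ∀ v : Fin d → ℂ, σ.mulVec v = 0 → ρ.mulVec v = 0)
    (P Q : Fin d × Fin d → ℝ)
    (hP : P = fun x => r x.1 * ‖⟪φ x.1, ψ x.2⟫_ℂ‖ ^ 2)
    (hQ : Q = fun x => s x.2 * ‖⟪φ x.1, ψ x.2⟫_ℂ‖ ^ 2) :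
    qRelVar ρ σ = klVar P Q := by
  classical
  have hinner : ∀ χ ξ : EuclideanSpace ℂ (Fin d),
      ⟪χ, ξ⟫_ℂ = ∑ i, (starRingEnd ℂ) (χ i) * ξ i := fun χ ξ => by
    simp [PiLp.inner_apply, RCLike.inner_apply]
    exact Finset.sum_congr rfl fun _ _ => mul_comm _ _
  have hothφ : ∀ a b : Fin d, ⟪φ a, φ b⟫_ℂ = if a = b then 1 else 0 :=
    orthonormal_iff_ite.mp φ.orthonormal
  have hothψ : ∀ a b : Fin d, ⟪ψ a, ψ b⟫_ℂ = if a = b then 1 else 0 :=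
    orthonormal_iff_ite.mp ψ.orthonormal
  set V : Matrix (Fin d) (Fin d) ℂ := Matrix.of (fun i a => φ a i) with hVdef
  set W : Matrix (Fin d) (Fin d) ℂ := Matrix.of (fun i b => ψ b i) with hWdef
  have hV2 : star V * V = 1 := by
    ext a b
    rw [Matrix.mul_apply, Matrix.one_apply, ← hothφ a b, hinner]
    refine Finset.sum_congr rfl fun i _ => ?_
    simp [hVdef, Matrix.star_apply, Complex.star_def]
  have hV1 : V * star V = 1 := mul_eq_one_comm.mp hV2
  have hW2 : star W * W = 1 := by
    ext a b
    rw [Matrix.mul_apply, Matrix.one_apply, ← hothψ a b, hinner]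
    refine Finset.sum_congr rfl fun i _ => ?_
    simp [hWdef, Matrix.star_apply, Complex.star_def]
  have hW1 : W * star W = 1 := mul_eq_one_comm.mp hW2
  have hρV : ρ = V * Matrix.diagonal (fun a => ((r a : ℝ) : ℂ)) * star V := by
    rw [hρ]
    ext i j
    simp only [Matrix.mul_apply, Matrix.star_apply, Matrix.of_apply, Complex.star_def, hVdef,
      Matrix.diagonal_apply, mul_ite, ite_mul, mul_zero, zero_mul, Finset.sum_ite_eq,
      Finset.sum_ite_eq', Finset.mem_univ, if_true]
    exact Finset.sum_congr rfl fun a _ => by ring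
  have hσW : σ = W * Matrix.diagonal (fun b => ((s b : ℝ) : ℂ)) * star W := by
    rw [hσ]
    ext i j
    simp only [Matrix.mul_apply, Matrix.star_apply, Matrix.of_apply, Complex.star_def, hWdef,
      Matrix.diagonal_apply, mul_ite, ite_mul, mul_zero, zero_mul, Finset.sum_ite_eq,
      Finset.sum_ite_eq', Finset.mem_univ, if_true]
    exact Finset.sum_congr rfl fun b _ => by ring
  set lr : Fin d → ℝ := fun a => Real.log (r a) with hlr
  set ls : Fin d → ℝ := fun b => Real.log (s b) with hls
  have hA : matLog ρ = V * Matrix.diagonal (fun a => ((lr a : ℝ) : ℂ)) * star V := by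
    rw [hρV]; exact matLogConj V hV1 hV2 r
  have hB : matLog σ = W * Matrix.diagonal (fun b => ((ls b : ℝ) : ℂ)) * star W := by
    rw [hσW]; exact matLogConj W hW1 hW2 s
  set nn : Fin d → Fin d → ℝ := fun a b => ‖⟪φ a, ψ b⟫_ℂ‖^2 with hnn
  have hc : ∀ a b, (star V * W) a b = ⟪φ a, ψ b⟫_ℂ := by
    intro a b
    rw [Matrix.mul_apply, hinner]
    refine Finset.sum_congr rfl fun i _ => ?_
    simp [hVdef, hWdef, Matrix.star_apply, Complex.star_def]
  have hcc : ∀ a b, (star V * W) a b * star ((star V * W) a b) = ((nn a b : ℝ) : ℂ) :=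
    fun a b => by rw [hc a b, mul_star_self_eq_normsq]
  have hn1 : ∀ a, ∑ b, nn a b = 1 := fun a => parseval φ ψ a
  have hmix : ∀ x y : Fin d → ℝ,
      ((V * Matrix.diagonal (fun a => ((x a : ℝ) : ℂ)) * star V) *
        (W * Matrix.diagonal (fun b => ((y b : ℝ) : ℂ)) * star W)).trace
      = ((∑ a, ∑ b, x a * y b * nn a b : ℝ) : ℂ) := by
    intro x y
    rw [traceForm V W hV1 hV2]
    push_cast
    exact Finset.sum_congr rfl fun a _ => Finset.sum_congr rfl fun b _ => by rw [hcc a b]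
  have hpure : ∀ x : Fin d → ℝ,
      (V * Matrix.diagonal (fun a => ((x a : ℝ) : ℂ)) * star V).trace
        = ((∑ a, x a : ℝ) : ℂ) := by
    intro x
    rw [traceConj V hV2]
    push_cast
    rfl
  -- trace atoms
  have hT1 : (ρ * (matLog ρ * matLog ρ)).trace = ((∑ a, r a * (lr a * lr a) : ℝ) : ℂ) := by
    rw [hA, hρV, conjMulR V hV2 lr lr, conjMulR V hV2 r (fun a => lr a * lr a), hpure]
  have hT2 : (ρ * (matLog ρ * matLog σ)).trace
      = ((∑ a, ∑ b, (r a * lr a) * ls b * nn a b : ℝ) : ℂ) := by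
    rw [hA, hB, hρV, ← mul_assoc, conjMulR V hV2 r lr, hmix (fun a => r a * lr a) ls]
  have hT3 : (ρ * (matLog σ * matLog ρ)).trace
      = ((∑ a, ∑ b, (r a * lr a) * ls b * nn a b : ℝ) : ℂ) := by
    rw [hA, hB, hρV, ← mul_assoc, Matrix.trace_mul_comm, ← mul_assoc, conjMulR V hV2 lr r,
      show (fun i => ((lr i * r i : ℝ) : ℂ)) = (fun i => ((r i * lr i : ℝ) : ℂ)) from
        funext fun i => by rw [mul_comm],
      hmix (fun a => r a * lr a) ls]
  have hT4 : (ρ * (matLog σ * matLog σ)).trace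
      = ((∑ a, ∑ b, r a * (ls b * ls b) * nn a b : ℝ) : ℂ) := by
    rw [hB, hρV, conjMulR W hW2 ls ls, hmix r (fun b => ls b * ls b)]
  have hT5 : (ρ * matLog ρ).trace = ((∑ a, r a * lr a : ℝ) : ℂ) := by
    rw [hA, hρV, conjMulR V hV2 r lr, hpure]
  have hT6 : (ρ * matLog σ).trace = ((∑ a, ∑ b, r a * ls b * nn a b : ℝ) : ℂ) := by
    rw [hB, hρV, hmix r ls]
  have hT7 : ρ.trace = ((∑ a, r a : ℝ) : ℂ) := by rw [hρV, hpure]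
  -- the quantum relative entropy
  have hu : qRelEnt ρ σ = (∑ a, r a * lr a) - ∑ a, ∑ b, r a * ls b * nn a b := by
    rw [qRelEnt, mul_sub, Matrix.trace_sub, hT5, hT6, ← Complex.ofReal_sub, Complex.ofReal_re]
  set Dq : ℝ := qRelEnt ρ σ with hDq
  -- expansion of the square
  have hMM : ρ * ((matLog ρ - matLog σ - (Dq : ℂ) • 1) * (matLog ρ - matLog σ - (Dq : ℂ) • 1))
      = ρ * (matLog ρ * matLog ρ) - ρ * (matLog ρ * matLog σ) - (Dq : ℂ) • (ρ * matLog ρ)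
        - ρ * (matLog σ * matLog ρ) + ρ * (matLog σ * matLog σ) + (Dq : ℂ) • (ρ * matLog σ)
        - (Dq : ℂ) • (ρ * matLog ρ) + (Dq : ℂ) • (ρ * matLog σ)
        + ((Dq : ℂ) * (Dq : ℂ)) • ρ := by
    simp only [sub_mul, mul_sub, smul_mul_assoc, mul_smul_comm, one_mul, mul_one, smul_smul,
      smul_sub]
    module
  have hQvar : qRelVar ρ σ = (∑ a, r a * (lr a * lr a))
      - 2 * (∑ a, ∑ b, (r a * lr a) * ls b * nn a b)
      + (∑ a, ∑ b, r a * (ls b * ls b) * nn a b)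
      - 2 * Dq * (∑ a, r a * lr a)
      + 2 * Dq * (∑ a, ∑ b, r a * ls b * nn a b) + Dq ^ 2 := by
    rw [qRelVar, ← hDq, hMM]
    simp only [Matrix.trace_sub, Matrix.trace_add, Matrix.trace_smul]
    rw [hT1, hT2, hT3, hT4, hT5, hT6, hT7, hr1]
    rw [← Complex.ofReal_re ((∑ a, r a * (lr a * lr a))
      - 2 * (∑ a, ∑ b, (r a * lr a) * ls b * nn a b)
      + (∑ a, ∑ b, r a * (ls b * ls b) * nn a b)
      - 2 * Dq * (∑ a, r a * lr a)
      + 2 * Dq * (∑ a, ∑ b, r a * ls b * nn a b) + Dq ^ 2)]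
    congr 1
    simp only [smul_eq_mul]
    push_cast
    ring
  -- support condition
  have hscore : ∀ a b, s b = 0 → r a ≠ 0 → ⟪φ a, ψ b⟫_ℂ = 0 := by
    intro a b hsb hra
    have hσv : σ.mulVec (fun j => ψ b j) = 0 := by
      funext i
      rw [show σ = Matrix.of fun i j => ∑ b', (s b' : ℂ) * ψ b' i * (starRingEnd ℂ) (ψ b' j)
        from hσ, mulVec_apply_expand]
      calc ∑ b', (s b' : ℂ) * (∑ j, (starRingEnd ℂ) (ψ b' j) * ψ b j) * ψ b' i
          = ∑ b', (s b' : ℂ) * (if b' = b then 1 else 0) * ψ b' i := by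
            refine Finset.sum_congr rfl fun b' _ => ?_
            rw [← hinner, hothψ b' b]
        _ = (s b : ℂ) * ψ b i := by
            simp [mul_ite, ite_mul, mul_one, mul_zero, zero_mul]
        _ = 0 := by rw [hsb]; simp
    have hρv := hsupp _ hσv
    have hexp : ∀ i, ρ.mulVec (fun j => ψ b j) i
        = ∑ a', (r a' : ℂ) * ⟪φ a', ψ b⟫_ℂ * φ a' i := by
      intro i
      rw [show ρ = Matrix.of fun i j => ∑ a', (r a' : ℂ) * φ a' i * (starRingEnd ℂ) (φ a' j)
        from hρ, mulVec_apply_expand]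
      exact Finset.sum_congr rfl fun a' _ => by rw [← hinner]
    have h0 : ∑ i, (starRingEnd ℂ) (φ a i) * ρ.mulVec (fun j => ψ b j) i = 0 := by
      rw [hρv]; simp
    rw [Finset.sum_congr rfl (fun i _ => by rw [hexp i])] at h0
    have h1 : ∑ i, (starRingEnd ℂ) (φ a i) * (∑ a', (r a' : ℂ) * ⟪φ a', ψ b⟫_ℂ * φ a' i)
        = (r a : ℂ) * ⟪φ a, ψ b⟫_ℂ := by
      calc ∑ i, (starRingEnd ℂ) (φ a i) * (∑ a', (r a' : ℂ) * ⟪φ a', ψ b⟫_ℂ * φ a' i)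
          = ∑ i, ∑ a', (starRingEnd ℂ) (φ a i) * ((r a' : ℂ) * ⟪φ a', ψ b⟫_ℂ * φ a' i) :=
            Finset.sum_congr rfl fun i _ => Finset.mul_sum _ _ _
        _ = ∑ a', ∑ i, (starRingEnd ℂ) (φ a i) * ((r a' : ℂ) * ⟪φ a', ψ b⟫_ℂ * φ a' i) :=
            Finset.sum_comm
        _ = ∑ a', (r a' : ℂ) * ⟪φ a', ψ b⟫_ℂ * (∑ i, (starRingEnd ℂ) (φ a i) * φ a' i) := by
            refine Finset.sum_congr rfl fun a' _ => ?_
            rw [Finset.mul_sum]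
            exact Finset.sum_congr rfl fun i _ => by ring
        _ = ∑ a', (r a' : ℂ) * ⟪φ a', ψ b⟫_ℂ * (if a = a' then 1 else 0) := by
            refine Finset.sum_congr rfl fun a' _ => ?_
            rw [← hinner, hothφ a a']
        _ = (r a : ℂ) * ⟪φ a, ψ b⟫_ℂ := by
            simp [mul_ite, mul_one, mul_zero]
    rw [h1] at h0
    exact (mul_eq_zero.mp h0).resolve_left (Complex.ofReal_ne_zero.mpr hra)
  have hPab : ∀ a b : Fin d, P (a, b) = r a * nn a b := fun a b => by rw [hP]
  have hQab : ∀ a b : Fin d, Q (a, b) = s b * nn a b := fun a b => by rw [hQ]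
  have hlog : ∀ a b, P (a, b) ≠ 0 → Real.log (P (a, b) / Q (a, b)) = lr a - ls b := by
    intro a b h
    have hrnn : r a * nn a b ≠ 0 := by rw [← hPab a b]; exact h
    obtain ⟨hra, hnab⟩ := mul_ne_zero_iff.mp hrnn
    have hsb : s b ≠ 0 := by
      intro hs0
      apply hnab
      show ‖⟪φ a, ψ b⟫_ℂ‖^2 = 0
      rw [hscore a b hs0 hra]
      simp
    rw [hPab a b, hQab a b, mul_comm (r a) (nn a b), mul_comm (s b) (nn a b),
      mul_div_mul_left _ _ hnab, Real.log_div hra hsb, hlr, hls]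
  -- classical relative entropy
  have hKpt : ∀ a b : Fin d,
      (if P (a, b) = 0 then 0 else P (a, b) * Real.log (P (a, b) / Q (a, b)))
      = (r a * lr a) * nn a b - r a * ls b * nn a b := by
    intro a b
    by_cases h : P (a, b) = 0
    · rw [if_pos h]
      have h' : r a * nn a b = 0 := by rw [← hPab a b]; exact h
      rw [show (r a * lr a) * nn a b - r a * ls b * nn a b
        = (lr a - ls b) * (r a * nn a b) from by ring, h', mul_zero]
    · rw [if_neg h, hlog a b h, hPab a b]
      ring
  have hK : klDiv P Q = (∑ a, r a * lr a) - ∑ a, ∑ b, r a * ls b * nn a b := by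
    rw [klDiv, Fintype.sum_prod_type]
    rw [Finset.sum_congr rfl fun a _ => Finset.sum_congr rfl fun b _ => hKpt a b]
    rw [show (∑ a, ∑ b, ((r a * lr a) * nn a b - r a * ls b * nn a b))
      = ∑ a, ((∑ b, (r a * lr a) * nn a b) - ∑ b, r a * ls b * nn a b) from
      Finset.sum_congr rfl fun a _ => Finset.sum_sub_distrib _ _]
    rw [Finset.sum_sub_distrib]
    congr 1
    refine Finset.sum_congr rfl fun a _ => ?_
    rw [← Finset.mul_sum, hn1 a, mul_one]
  have hKD : klDiv P Q = Dq := by rw [hK, hu]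
  -- classical variance
  have hVpt : ∀ a b : Fin d,
      (if P (a, b) = 0 then 0 else P (a, b) * (Real.log (P (a, b) / Q (a, b)) - klDiv P Q) ^ 2)
      = r a * nn a b * (lr a - ls b - Dq) ^ 2 := by
    intro a b
    by_cases h : P (a, b) = 0
    · rw [if_pos h]
      have h' : r a * nn a b = 0 := by rw [← hPab a b]; exact h
      rw [show r a * nn a b * (lr a - ls b - Dq) ^ 2
        = (lr a - ls b - Dq) ^ 2 * (r a * nn a b) from by ring, h', mul_zero]
    · rw [if_neg h, hlog a b h, hKD, hPab a b]
  have hVval : klVar P Q = ∑ a, ∑ b, r a * nn a b * (lr a - ls b - Dq) ^ 2 := by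
    rw [klVar, Fintype.sum_prod_type]
    exact Finset.sum_congr rfl fun a _ => Finset.sum_congr rfl fun b _ => hVpt a b
  rw [hQvar, hVval]
  -- final real identity
  have hfin : ∀ a, ∑ b, r a * nn a b * (lr a - ls b - Dq) ^ 2
      = (r a * (lr a * lr a) - 2 * Dq * (r a * lr a) + Dq ^ 2 * r a)
        + ((2 * Dq * r a - 2 * (r a * lr a)) * (∑ b, ls b * nn a b)
          + r a * (∑ b, ls b * (ls b * nn a b))) := by
    intro a
    calc ∑ b, r a * nn a b * (lr a - ls b - Dq) ^ 2
        = ∑ b, ((r a * (lr a * lr a) - 2 * Dq * (r a * lr a) + Dq ^ 2 * r a) * nn a b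
            + ((2 * Dq * r a - 2 * (r a * lr a)) * (ls b * nn a b)
              + r a * (ls b * (ls b * nn a b)))) :=
          Finset.sum_congr rfl fun b _ => by ring
      _ = (r a * (lr a * lr a) - 2 * Dq * (r a * lr a) + Dq ^ 2 * r a) * (∑ b, nn a b)
            + ((2 * Dq * r a - 2 * (r a * lr a)) * (∑ b, ls b * nn a b)
              + r a * (∑ b, ls b * (ls b * nn a b))) := by
          rw [Finset.sum_add_distrib, Finset.sum_add_distrib, ← Finset.mul_sum,
            ← Finset.mul_sum, ← Finset.mul_sum]
      _ = _ := by rw [hn1 a, mul_one]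
  rw [Finset.sum_congr rfl fun a _ => hfin a]
  have e2 : ∑ a, (2 * Dq * r a - 2 * (r a * lr a)) * (∑ b, ls b * nn a b)
      = 2 * Dq * (∑ a, ∑ b, r a * ls b * nn a b)
        - 2 * (∑ a, ∑ b, (r a * lr a) * ls b * nn a b) := by
    calc ∑ a, (2 * Dq * r a - 2 * (r a * lr a)) * (∑ b, ls b * nn a b)
        = ∑ a, (2 * Dq * (∑ b, r a * ls b * nn a b)
            - 2 * (∑ b, (r a * lr a) * ls b * nn a b)) := by
          refine Finset.sum_congr rfl fun a _ => ?_
          rw [Finset.mul_sum, Finset.mul_sum, Finset.mul_sum, ← Finset.sum_sub_distrib]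
          exact Finset.sum_congr rfl fun b _ => by ring
      _ = 2 * Dq * (∑ a, ∑ b, r a * ls b * nn a b)
            - 2 * (∑ a, ∑ b, (r a * lr a) * ls b * nn a b) := by
          rw [Finset.sum_sub_distrib, ← Finset.mul_sum, ← Finset.mul_sum]
  have e3 : ∑ a, r a * (∑ b, ls b * (ls b * nn a b))
      = ∑ a, ∑ b, r a * (ls b * ls b) * nn a b := by
    refine Finset.sum_congr rfl fun a _ => ?_
    rw [Finset.mul_sum]
    exact Finset.sum_congr rfl fun b _ => by ring
  simp only [Finset.sum_add_distrib, Finset.sum_sub_distrib]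
  rw [e2, e3, ← Finset.mul_sum, ← Finset.mul_sum, hr1, mul_one]
  ring
end

section
/- Let ρ, σ be density matrices on a d-dimensional Hilbert space with λ_min(σ) ≥ λ > 0, and let Z := ln(P^{ρ,σ}/Q^{ρ,σ}) be the Nussbaum–Szkoła log-likelihood ratio with moment generating function m(t) := E[e^{tZ}]. Then for every k ≥ 1 and |t| ≤ 1/2: |m^{(k)}(t)| ≤ (1/√λ)·[ (ln(1/λ))^k + (2k/e)^k ]. -/
open Finset
open scoped InnerProductSpace

/-- The moment generating function of the Nussbaum–Szkoła log-likelihood ratio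
`Z = ln(P/Q)` under `P`: `m(t) = E_P[e^{tZ}]` (terms with `P x = 0` vanish). -/
noncomputable def nsMgf {α : Type*} [Fintype α] (P Q : α → ℝ) (t : ℝ) : ℝ :=
  ∑ x, P x * Real.exp (t * Real.log (P x / Q x))


private lemma expTermHasDerivAt (c L u : ℝ) :
    HasDerivAt (fun t => c * Real.exp (t * L)) (c * L * Real.exp (u * L)) u := by
  have h1 : HasDerivAt (fun t : ℝ => t * L) L u := by
    simpa using (hasDerivAt_id u).mul_const L
  have h2 : HasDerivAt (fun t : ℝ => Real.exp (t * L)) (Real.exp (u * L) * L) u :=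
    h1.exp
  have := h2.const_mul c
  rw [show c * L * Real.exp (u * L) = c * (Real.exp (u * L) * L) by ring]
  exact this

private lemma iteratedDeriv_sum_exp {ι : Type*} [Fintype ι] (c L : ι → ℝ) (k : ℕ) :
    iteratedDeriv k (fun t => ∑ i, c i * Real.exp (t * L i))
      = fun t => ∑ i, c i * L i ^ k * Real.exp (t * L i) := by
  induction k with
  | zero => simp
  | succ n ih =>
    rw [iteratedDeriv_succ, ih]
    funext u
    have h : HasDerivAt (fun t => ∑ i, c i * L i ^ n * Real.exp (t * L i))
        (∑ i, c i * L i ^ n * L i * Real.exp (u * L i)) u :=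
      HasDerivAt.fun_sum fun i _ => expTermHasDerivAt (c i * L i ^ n) (L i) u
    rw [h.deriv]
    exact Finset.sum_congr rfl fun i _ => by ring


private lemma pow_le_exp_half (k : ℕ) (hk : 1 ≤ k) (y : ℝ) (hy : 0 ≤ y) :
    y ^ k ≤ (2 * k / Real.exp 1) ^ k * Real.exp (y / 2) := by
  have hk0 : (0 : ℝ) < k := by exact_mod_cast hk
  have h1 : y / (2 * k) ≤ Real.exp (y / (2 * k) - 1) := by
    have := Real.add_one_le_exp (y / (2 * k) - 1); linarith
  have h2 : y ≤ 2 * k / Real.exp 1 * Real.exp (y / (2 * k)) := by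
    have h3 : Real.exp (y / (2 * k) - 1) = Real.exp (y / (2 * k)) / Real.exp 1 :=
      Real.exp_sub _ _
    rw [h3] at h1
    have h4 : y / (2 * k) * (2 * k) ≤ Real.exp (y / (2 * k)) / Real.exp 1 * (2 * k) :=
      mul_le_mul_of_nonneg_right h1 (by positivity)
    calc y = y / (2 * k) * (2 * k) := by field_simp
      _ ≤ Real.exp (y / (2 * k)) / Real.exp 1 * (2 * k) := h4
      _ = 2 * k / Real.exp 1 * Real.exp (y / (2 * k)) := by ring
  calc y ^ k ≤ (2 * k / Real.exp 1 * Real.exp (y / (2 * k))) ^ k :=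
        pow_le_pow_left₀ hy h2 k
    _ = (2 * k / Real.exp 1) ^ k * Real.exp (y / 2) := by
        rw [mul_pow, ← Real.exp_nat_mul]
        congr 1
        field_simp

private lemma termBound (lam r s t : ℝ) (k : ℕ) (hk : 1 ≤ k)
    (hlam : 0 < lam) (hr0 : 0 < r) (hr1 : r ≤ 1) (hls : lam ≤ s) (hs1 : s ≤ 1)
    (ht : |t| ≤ 1 / 2) :
    r * |Real.log (r / s)| ^ k * Real.exp (t * Real.log (r / s)) ≤
      (1 / Real.sqrt lam) * (r * Real.log (1 / lam) ^ k + s * (2 * k / Real.exp 1) ^ k) := by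
  have hs0 : 0 < s := lt_of_lt_of_le hlam hls
  have hlam1 : lam ≤ 1 := hls.trans hs1
  have hw0 : 0 < r / s := div_pos hr0 hs0
  have hexp : Real.exp (t * Real.log (r / s)) = (r / s) ^ t := by
    rw [Real.rpow_def_of_pos hw0, mul_comm]
  have ht1 : t ≤ 1 / 2 := (abs_le.mp ht).2
  have ht2 : -(1 / 2) ≤ t := (abs_le.mp ht).1
  have hsl1 : Real.sqrt lam ≤ 1 := Real.sqrt_le_one.mpr hlam1
  have hsl0 : 0 < Real.sqrt lam := Real.sqrt_pos.mpr hlam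
  have hA : 0 ≤ Real.log (1 / lam) := Real.log_nonneg (by
    rw [le_div_iff₀ hlam]; linarith)
  have hB : (0:ℝ) ≤ (2 * k / Real.exp 1) ^ k := by positivity
  have hAk : (0:ℝ) ≤ Real.log (1 / lam) ^ k := by positivity
  rcases le_or_gt 1 (r / s) with hw | hw
  · -- r ≥ s case
    have hlog0 : 0 ≤ Real.log (r / s) := Real.log_nonneg hw
    have habs : |Real.log (r / s)| = Real.log (r / s) := abs_of_nonneg hlog0
    have hwle : r / s ≤ 1 / lam := by
      rw [div_le_div_iff₀ hs0 hlam]; nlinarith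
    have hpow : Real.log (r / s) ^ k ≤ Real.log (1 / lam) ^ k :=
      pow_le_pow_left₀ hlog0 (Real.log_le_log hw0 hwle) k
    have hrp : (r / s) ^ t ≤ Real.sqrt (r / s) := by
      rw [Real.sqrt_eq_rpow]
      exact Real.rpow_le_rpow_of_exponent_le hw ht1
    have hsqle : Real.sqrt (r / s) ≤ 1 / Real.sqrt lam := by
      rw [Real.sqrt_div hr0.le]
      exact div_le_div₀ zero_le_one (Real.sqrt_le_one.mpr hr1) hsl0
        ((Real.sqrt_le_sqrt hls))
    have h5 : (r / s) ^ t ≤ 1 / Real.sqrt lam := hrp.trans hsqle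
    rw [habs, hexp]
    have hmain : r * Real.log (r / s) ^ k * (r / s) ^ t ≤
        r * Real.log (1 / lam) ^ k * (1 / Real.sqrt lam) := by
      apply mul_le_mul _ h5 (Real.rpow_nonneg hw0.le t) (by positivity)
      exact mul_le_mul_of_nonneg_left hpow hr0.le
    have h6 : 0 ≤ s * (2 * k / Real.exp 1) ^ k := mul_nonneg hs0.le hB
    have h7 : (0:ℝ) ≤ 1 / Real.sqrt lam := by positivity
    calc r * Real.log (r / s) ^ k * (r / s) ^ t
        ≤ r * Real.log (1 / lam) ^ k * (1 / Real.sqrt lam) := hmain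
      _ = (1 / Real.sqrt lam) * (r * Real.log (1 / lam) ^ k) := by ring
      _ ≤ (1 / Real.sqrt lam) *
          (r * Real.log (1 / lam) ^ k + s * (2 * k / Real.exp 1) ^ k) :=
        mul_le_mul_of_nonneg_left (by linarith) h7
  · -- r < s case
    have hrs : r ≤ s := by nlinarith [(div_lt_one hs0).mp hw]
    have habs : |Real.log (r / s)| = Real.log (s / r) := by
      rw [abs_of_nonpos (Real.log_nonpos hw0.le hw.le), ← Real.log_inv, inv_div]
    have hy : 0 ≤ Real.log (s / r) := Real.log_nonneg ((one_le_div hr0).mpr hrs)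
    have hsr0 : (0:ℝ) < s / r := div_pos hs0 hr0
    have hrp : (r / s) ^ t ≤ Real.sqrt (s / r) := by
      have h8 : (r / s) ^ t ≤ (r / s) ^ (-(1/2) : ℝ) :=
        Real.rpow_le_rpow_of_exponent_ge hw0 hw.le ht2
      have h9 : (r / s) ^ (-(1/2) : ℝ) = Real.sqrt (s / r) := by
        rw [Real.rpow_neg hw0.le, ← Real.sqrt_eq_rpow, ← Real.sqrt_inv, inv_div]
      rwa [h9] at h8
    have hexp2 : Real.exp (Real.log (s / r) / 2) = Real.sqrt (s / r) := by
      rw [Real.sqrt_eq_rpow, Real.rpow_def_of_pos hsr0]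
      congr 1; ring
    have hyk : Real.log (s / r) ^ k ≤
        (2 * k / Real.exp 1) ^ k * Real.sqrt (s / r) := by
      have := pow_le_exp_half k hk (Real.log (s / r)) hy
      rwa [hexp2] at this
    rw [habs, hexp]
    have hmain : r * Real.log (s / r) ^ k * (r / s) ^ t ≤
        r * ((2 * k / Real.exp 1) ^ k * Real.sqrt (s / r)) * Real.sqrt (s / r) := by
      apply mul_le_mul _ hrp (Real.rpow_nonneg hw0.le t) (by positivity)
      exact mul_le_mul_of_nonneg_left hyk hr0.le
    have hms : r * ((2 * k / Real.exp 1) ^ k * Real.sqrt (s / r)) * Real.sqrt (s / r)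
        = s * (2 * k / Real.exp 1) ^ k := by
      have hss : Real.sqrt (s / r) * Real.sqrt (s / r) = s / r :=
        Real.mul_self_sqrt hsr0.le
      have h10 : r * (s / r) = s := by field_simp
      calc r * ((2 * k / Real.exp 1) ^ k * Real.sqrt (s / r)) * Real.sqrt (s / r)
          = (2 * k / Real.exp 1) ^ k * (r * (Real.sqrt (s / r) * Real.sqrt (s / r))) := by
            ring
        _ = s * (2 * k / Real.exp 1) ^ k := by rw [hss, h10, mul_comm]
    rw [hms] at hmain
    have h6 : 0 ≤ r * Real.log (1 / lam) ^ k := mul_nonneg hr0.le hAk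
    have h1le : 1 ≤ 1 / Real.sqrt lam := by
      rw [le_div_iff₀ hsl0, one_mul]; exact hsl1
    have h7 : (0:ℝ) ≤ 1 / Real.sqrt lam := by positivity
    calc r * Real.log (s / r) ^ k * (r / s) ^ t
        ≤ s * (2 * k / Real.exp 1) ^ k := hmain
      _ ≤ (1 / Real.sqrt lam) * (s * (2 * k / Real.exp 1) ^ k) :=
        le_mul_of_one_le_left (mul_nonneg hs0.le hB) h1le
      _ ≤ (1 / Real.sqrt lam) *
          (r * Real.log (1 / lam) ^ k + s * (2 * k / Real.exp 1) ^ k) :=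
        mul_le_mul_of_nonneg_left (by linarith) h7


private lemma parseval_s13 {ι : Type*} [Fintype ι] {E : Type*}
    [NormedAddCommGroup E] [InnerProductSpace ℂ E]
    (b : OrthonormalBasis ι ℂ E) (x : E) :
    ∑ i, ‖⟪x, b i⟫_ℂ‖ ^ 2 = ‖x‖ ^ 2 := by
  have h := b.sum_inner_mul_inner x x
  have h2 : ∀ i, ⟪x, b i⟫_ℂ * ⟪b i, x⟫_ℂ = ((‖⟪x, b i⟫_ℂ‖ : ℝ) ^ 2 : ℂ) := fun i => by
    rw [← inner_conj_symm x (b i), ← Complex.normSq_eq_conj_mul_self,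
      Complex.normSq_eq_norm_sq, RCLike.norm_conj]
    norm_cast
  simp_rw [h2] at h
  rw [inner_self_eq_norm_sq_to_K] at h
  have := congrArg Complex.re h
  simpa [← Complex.ofReal_pow] using this

/-- For density matrices `ρ, σ` on a `d`-dimensional space with `λ_min(σ) ≥ λ > 0`,
the `k`-th derivative of the moment generating function of the Nussbaum–Szkoła
log-likelihood ratio satisfies, for every `k ≥ 1` and `|t| ≤ 1/2`,
`|m⁽ᵏ⁾(t)| ≤ (1/√λ)·[(ln(1/λ))^k + (2k/e)^k]`. -/

theorem nsMgf_deriv_bound (d : ℕ) (hd : 0 < d)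
    (r s : Fin d → ℝ) (hr : ∀ a, 0 ≤ r a) (hs : ∀ b, 0 ≤ s b)
    (hr1 : ∑ a, r a = 1) (hs1 : ∑ b, s b = 1)
    (φ ψ : OrthonormalBasis (Fin d) ℂ (EuclideanSpace ℂ (Fin d)))
    (P Q : Fin d × Fin d → ℝ)
    (hP : P = fun x => r x.1 * ‖⟪φ x.1, ψ x.2⟫_ℂ‖ ^ 2)
    (hQ : Q = fun x => s x.2 * ‖⟪φ x.1, ψ x.2⟫_ℂ‖ ^ 2)
    (lam : ℝ) (hlam : 0 < lam) (hlams : ∀ b, lam ≤ s b)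
    (k : ℕ) (hk : 1 ≤ k) (t : ℝ) (ht : |t| ≤ 1 / 2) :
    |iteratedDeriv k (nsMgf P Q) t| ≤
      (1 / Real.sqrt lam) *
        ((Real.log (1 / lam)) ^ k + (2 * (k : ℝ) / Real.exp 1) ^ k) := by
  classical
  set C : Fin d × Fin d → ℝ := fun x => ‖⟪φ x.1, ψ x.2⟫_ℂ‖ ^ 2 with hCdef
  have hC0 : ∀ x, 0 ≤ C x := fun x => by positivity
  have hC1 : ∀ a, ∑ b, C (a, b) = 1 := fun a => by
    have h := parseval_s13 ψ (φ a)
    have hn : ‖φ a‖ = 1 := φ.orthonormal.1 a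
    rw [hn] at h
    simpa [hCdef] using h
  have hC2 : ∀ b, ∑ a, C (a, b) = 1 := fun b => by
    have h := parseval_s13 φ (ψ b)
    have hn : ‖ψ b‖ = 1 := ψ.orthonormal.1 b
    rw [hn] at h
    simp only [hCdef]
    calc ∑ a, ‖⟪φ a, ψ b⟫_ℂ‖ ^ 2 = ∑ a, ‖⟪ψ b, φ a⟫_ℂ‖ ^ 2 := by
          exact Finset.sum_congr rfl fun a _ => by rw [norm_inner_symm]
      _ = 1 := by simpa using h
  have hPx : ∀ x, P x = r x.1 * C x := fun x => by rw [hP]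
  have hQx : ∀ x, Q x = s x.2 * C x := fun x => by rw [hQ]
  have hr1' : ∀ a, r a ≤ 1 := fun a => by
    rw [← hr1]
    exact Finset.single_le_sum (fun i _ => hr i) (Finset.mem_univ a)
  have hs1' : ∀ b, s b ≤ 1 := fun b => by
    rw [← hs1]
    exact Finset.single_le_sum (fun i _ => hs i) (Finset.mem_univ b)
  have hA : 0 ≤ Real.log (1 / lam) := Real.log_nonneg (by
    rw [le_div_iff₀ hlam]
    have := (hlams ⟨0, hd⟩).trans (hs1' ⟨0, hd⟩)
    linarith)
  have hB : (0:ℝ) ≤ (2 * k / Real.exp 1) ^ k := by positivity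
  have hD : iteratedDeriv k (nsMgf P Q) t =
      ∑ x, P x * (Real.log (P x / Q x)) ^ k * Real.exp (t * Real.log (P x / Q x)) := by
    have h0 : nsMgf P Q = fun u => ∑ x, P x * Real.exp (u * Real.log (P x / Q x)) := rfl
    rw [h0, iteratedDeriv_sum_exp P (fun x => Real.log (P x / Q x)) k]
  have key : ∀ x : Fin d × Fin d,
      |P x * (Real.log (P x / Q x)) ^ k * Real.exp (t * Real.log (P x / Q x))| ≤
        (1 / Real.sqrt lam) * (r x.1 * C x * Real.log (1 / lam) ^ k
          + s x.2 * C x * (2 * k / Real.exp 1) ^ k) := by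
    intro x
    have hP0 : 0 ≤ P x := by rw [hPx x]; exact mul_nonneg (hr _) (hC0 _)
    have habs : |P x * (Real.log (P x / Q x)) ^ k * Real.exp (t * Real.log (P x / Q x))|
        = P x * |Real.log (P x / Q x)| ^ k * Real.exp (t * Real.log (P x / Q x)) := by
      rw [abs_mul, abs_mul, abs_pow, abs_of_nonneg hP0, abs_of_nonneg (Real.exp_pos _).le]
    by_cases hc : C x = 0
    · rw [habs, hPx x, hc]
      simp
    by_cases hrz : r x.1 = 0
    · rw [habs, hPx x, hrz]
      simp only [zero_mul, mul_zero]
      have h1 := hs x.2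
      have h2 := hC0 x
      positivity
    · have hc0 : 0 < C x := (hC0 x).lt_of_ne (Ne.symm hc)
      have hr0 : 0 < r x.1 := (hr x.1).lt_of_ne (Ne.symm hrz)
      have hQP : P x / Q x = r x.1 / s x.2 := by
        rw [hPx x, hQx x, mul_div_mul_right _ _ hc]
      rw [habs, hQP, hPx x]
      have h1 := termBound lam (r x.1) (s x.2) t k hk hlam hr0 (hr1' _)
        (hlams _) (hs1' _) ht
      have h2 := mul_le_mul_of_nonneg_left h1 (hC0 x)
      calc r x.1 * C x * |Real.log (r x.1 / s x.2)| ^ k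
            * Real.exp (t * Real.log (r x.1 / s x.2))
          = C x * (r x.1 * |Real.log (r x.1 / s x.2)| ^ k
            * Real.exp (t * Real.log (r x.1 / s x.2))) := by ring
        _ ≤ C x * ((1 / Real.sqrt lam) * (r x.1 * Real.log (1 / lam) ^ k
            + s x.2 * (2 * k / Real.exp 1) ^ k)) := h2
        _ = (1 / Real.sqrt lam) * (r x.1 * C x * Real.log (1 / lam) ^ k
            + s x.2 * C x * (2 * k / Real.exp 1) ^ k) := by ring
  have e1 : ∑ x : Fin d × Fin d, r x.1 * C x = 1 := by
    rw [Fintype.sum_prod_type]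
    calc ∑ a, ∑ b, r a * C (a, b) = ∑ a, r a := by
          exact Finset.sum_congr rfl fun a _ => by
            rw [← Finset.mul_sum, hC1 a, mul_one]
      _ = 1 := hr1
  have e2 : ∑ x : Fin d × Fin d, s x.2 * C x = 1 := by
    rw [Fintype.sum_prod_type_right]
    calc ∑ b, ∑ a, s b * C (a, b) = ∑ b, s b := by
          exact Finset.sum_congr rfl fun b _ => by
            rw [← Finset.mul_sum, hC2 b, mul_one]
      _ = 1 := hs1
  calc |iteratedDeriv k (nsMgf P Q) t|
      = |∑ x, P x * (Real.log (P x / Q x)) ^ k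
          * Real.exp (t * Real.log (P x / Q x))| := by rw [hD]
    _ ≤ ∑ x, |P x * (Real.log (P x / Q x)) ^ k
          * Real.exp (t * Real.log (P x / Q x))| := Finset.abs_sum_le_sum_abs _ _
    _ ≤ ∑ x, (1 / Real.sqrt lam) * (r x.1 * C x * Real.log (1 / lam) ^ k
          + s x.2 * C x * (2 * k / Real.exp 1) ^ k) :=
        Finset.sum_le_sum fun x _ => key x
    _ = (1 / Real.sqrt lam) *
          ((Real.log (1 / lam)) ^ k + (2 * (k : ℝ) / Real.exp 1) ^ k) := by
        rw [← Finset.mul_sum]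
        congr 1
        rw [Finset.sum_add_distrib, ← Finset.sum_mul, ← Finset.sum_mul, e1, e2,
          one_mul, one_mul]
end

section
/- For every λ ∈ (0, 1/d] and k ≥ 1 there is a constant C_k(λ) such that for all density matrices ρ, σ on a d-dimensional Hilbert space with λ_min(σ) ≥ λ, the cumulant generating function h(t) := ln E[e^{tZ}] of the Nussbaum–Szkoła log-likelihood ratio Z := ln(P^{ρ,σ}/Q^{ρ,σ}) satisfies sup_{|t|≤1/2} |h^{(k)}(t)| ≤ C_k. -/
open Finset
open scoped InnerProductSpace

/-- The cumulant generating function `h(t) = ln E_P[e^{tZ}]` of the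
Nussbaum–Szkoła log-likelihood ratio. -/
noncomputable def nsCgf {α : Type*} [Fintype α] (P Q : α → ℝ) (t : ℝ) : ℝ :=
  Real.log (nsMgf P Q t)

-- x^j ≤ j! * exp x for x ≥ 0
lemma aux_pow_le_exp (j : ℕ) (x : ℝ) (hx : 0 ≤ x) : x ^ j ≤ (Nat.factorial j : ℝ) * Real.exp x := by
  have h1 : x ^ j / Nat.factorial j ≤ ∑ i ∈ range (j+1), x ^ i / Nat.factorial i := by
    refine Finset.single_le_sum (f := fun i => x ^ i / Nat.factorial i) (fun i _ => by positivity) ?_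
    simp
  have h2 := Real.sum_le_exp_of_nonneg hx (j+1)
  have hj : (0:ℝ) < Nat.factorial j := by positivity
  calc x ^ j = (x ^ j / Nat.factorial j) * Nat.factorial j := by field_simp
    _ ≤ Real.exp x * Nat.factorial j := by
        exact mul_le_mul_of_nonneg_right (h1.trans h2) hj.le
    _ = (Nat.factorial j : ℝ) * Real.exp x := by ring

lemma aux_abs_pow_le (j : ℕ) (c : ℝ) :
    |c| ^ j ≤ (Nat.factorial j : ℝ) * 8 ^ j * (Real.exp (c/8) + Real.exp (-c/8)) := by
  have h1 : |c| ^ j = 8 ^ j * (|c|/8) ^ j := by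
    rw [div_pow, ← mul_div_assoc]
    field_simp
  have h2 : (|c|/8) ^ j ≤ (Nat.factorial j : ℝ) * Real.exp (|c|/8) := aux_pow_le_exp j _ (by positivity)
  have h3 : Real.exp (|c|/8) ≤ Real.exp (c/8) + Real.exp (-c/8) := by
    rcases abs_cases c with ⟨h, _⟩ | ⟨h, _⟩
    · rw [h]; nlinarith [Real.exp_pos (-c/8)]
    · rw [h]; nlinarith [Real.exp_pos (c/8), (by ring : -c/8 = (-c)/8)]
  calc |c| ^ j = 8 ^ j * (|c|/8) ^ j := h1
    _ ≤ 8 ^ j * ((Nat.factorial j : ℝ) * Real.exp (|c|/8)) := by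
        exact mul_le_mul_of_nonneg_left h2 (by positivity)
    _ ≤ 8 ^ j * ((Nat.factorial j : ℝ) * (Real.exp (c/8) + Real.exp (-c/8))) := by
        refine mul_le_mul_of_nonneg_left (mul_le_mul_of_nonneg_left h3 (by positivity)) (by positivity)
    _ = (Nat.factorial j : ℝ) * 8 ^ j * (Real.exp (c/8) + Real.exp (-c/8)) := by ring

-- iterated derivative of log on positive reals
lemma aux_iteratedDeriv_log (n : ℕ) :
    ∀ y : ℝ, 0 < y → iteratedDeriv (n+1) Real.log y = (-1)^n * (Nat.factorial n : ℝ) * y ^ (-(n+1) : ℤ) := by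
  induction n with
  | zero =>
    intro y hy
    rw [iteratedDeriv_one, Real.deriv_log]
    simp
  | succ n ih =>
    intro y hy
    rw [iteratedDeriv_succ]
    have hev : iteratedDeriv (n+1) Real.log =ᶠ[nhds y]
        (fun z => (-1:ℝ)^n * (Nat.factorial n : ℝ) * z ^ (-(n+1) : ℤ)) := by
      filter_upwards [isOpen_Ioi.mem_nhds (Set.mem_Ioi.mpr hy)] with z hz
      exact ih z hz
    rw [hev.deriv_eq]
    have hdiff : DifferentiableAt ℝ (fun z : ℝ => z ^ (-(n+1) : ℤ)) y :=
      differentiableAt_zpow.mpr (Or.inl hy.ne')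
    rw [deriv_const_mul _ hdiff, deriv_zpow]
    have : (-(n+1) : ℤ) - 1 = -(n+1+1) := by ring
    rw [this]
    push_cast [Nat.factorial_succ]
    ring

lemma nsMgf_contDiff {α : Type*} [Fintype α] (P Q : α → ℝ) (n : WithTop ℕ∞) :
    ContDiff ℝ n (nsMgf P Q) := by
  unfold nsMgf
  refine ContDiff.sum fun x _ => ?_
  exact contDiff_const.mul (Real.contDiff_exp.comp (contDiff_id.mul contDiff_const))

lemma nsMgf_iteratedDeriv {α : Type*} [Fintype α] (P Q : α → ℝ) (j : ℕ) :
    iteratedDeriv j (nsMgf P Q) =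
      fun t => ∑ x, P x * (Real.log (P x / Q x)) ^ j * Real.exp (t * Real.log (P x / Q x)) := by
  induction j with
  | zero => funext t; simp [nsMgf]
  | succ j ih =>
    funext t
    rw [iteratedDeriv_succ, ih]
    have hterm : ∀ (x : α), HasDerivAt
        (fun u => P x * (Real.log (P x / Q x)) ^ j * Real.exp (u * Real.log (P x / Q x)))
        (P x * (Real.log (P x / Q x)) ^ (j+1) * Real.exp (t * Real.log (P x / Q x))) t := by
      intro x
      set c := Real.log (P x / Q x)
      have h1 : HasDerivAt (fun u : ℝ => u * c) c t := by
        simpa using (hasDerivAt_id t).mul_const c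
      have h2 := h1.exp
      have h3 := h2.const_mul (P x * c ^ j)
      exact h3.congr_deriv (by ring)
    rw [deriv_fun_sum (fun x _ => (hterm x).differentiableAt)]
    exact Finset.sum_congr rfl fun x _ => (hterm x).deriv

lemma aux_parseval {ι : Type*} [Fintype ι] {E : Type*} [NormedAddCommGroup E]
    [InnerProductSpace ℂ E] (b : OrthonormalBasis ι ℂ E) (x : E) :
    ∑ i, ‖⟪b i, x⟫_ℂ‖ ^ 2 = ‖x‖ ^ 2 := by
  have h2 : ‖b.repr x‖ = ‖x‖ := b.repr.norm_map x
  rw [← h2, EuclideanSpace.norm_eq, Real.sq_sqrt (by positivity)]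
  exact Finset.sum_congr rfl fun i _ => by rw [b.repr_apply_apply]

/-- Bounded cumulants (Lemma 3.6 of the paper).  For every `λ ∈ (0, 1/d]` and
`k ≥ 1` there is a constant `C_k(λ)` such that for all density matrices `ρ, σ` on a
`d`-dimensional Hilbert space with `λ_min(σ) ≥ λ`, the cumulant generating function
`h(t) = ln E[e^{tZ}]` of the Nussbaum–Szkoła log-likelihood ratio satisfies
`sup_{|t| ≤ 1/2} |h⁽ᵏ⁾(t)| ≤ C_k`. -/
theorem ns_cgf_bounded_cumulants (d : ℕ) (hd : 0 < d)
    (lam : ℝ) (hlam : 0 < lam) (hlamd : lam ≤ 1 / d) (k : ℕ) (hk : 1 ≤ k) :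
    ∃ C : ℝ, ∀ (r s : Fin d → ℝ), (∀ a, 0 ≤ r a) → (∀ b, 0 ≤ s b) →
      (∑ a, r a = 1) → (∑ b, s b = 1) →
      ∀ (φ ψ : OrthonormalBasis (Fin d) ℂ (EuclideanSpace ℂ (Fin d)))
        (P Q : Fin d × Fin d → ℝ),
        P = (fun x => r x.1 * ‖⟪φ x.1, ψ x.2⟫_ℂ‖ ^ 2) →
        Q = (fun x => s x.2 * ‖⟪φ x.1, ψ x.2⟫_ℂ‖ ^ 2) →
        (∀ b, lam ≤ s b) →
        ∀ t : ℝ, |t| ≤ 1 / 2 → |iteratedDeriv k (nsCgf P Q) t| ≤ C := by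
  classical
  have hd1 : (1:ℝ) ≤ d := by exact_mod_cast hd
  have hlam1 : lam ≤ 1 := hlamd.trans (by rw [div_le_one (by linarith)]; exact hd1)
  have hΛ1 : (1:ℝ) ≤ lam⁻¹ := by
    have := mul_inv_cancel₀ hlam.ne'
    nlinarith [inv_pos.mpr hlam]
  set m₀ : ℝ := lam * ((d:ℝ)^3)⁻¹ with hm₀def
  have hm₀ : 0 < m₀ := by positivity
  have hm₀lam : m₀ ≤ lam := by
    rw [hm₀def]
    nlinarith [inv_le_one_of_one_le₀ (one_le_pow₀ hd1 (n := 3))]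
  have hm₀1 : m₀ ≤ 1 := hm₀lam.trans hlam1
  set C1 : ℝ := (Nat.factorial (k-1) : ℝ) * ((m₀/2)^k)⁻¹ + |Real.log (m₀/2)| + |Real.log (lam⁻¹^2+1)| with hC1def
  set Dc : ℝ := 2 * (Nat.factorial k : ℝ) * 8^k * lam⁻¹^2 + 1 with hDcdef
  refine ⟨(Nat.factorial k : ℝ) * C1 * Dc ^ k, ?_⟩
  intro r s hr hs hr1 hs1 φ ψ P Q hP hQ hslam t ht
  haveI : Nonempty (Fin d) := ⟨⟨0, hd⟩⟩
  set w : Fin d × Fin d → ℝ := fun x => ‖⟪φ x.1, ψ x.2⟫_ℂ‖ ^ 2 with hwdef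
  have hP' : ∀ x, P x = r x.1 * w x := fun x => by rw [hP]
  have hQ' : ∀ x, Q x = s x.2 * w x := fun x => by rw [hQ]
  have hwnn : ∀ x, 0 ≤ w x := fun x => by rw [hwdef]; positivity
  have hPnn : ∀ x, 0 ≤ P x := fun x => by rw [hP' x]; exact mul_nonneg (hr _) (hwnn x)
  have hsum_b : ∀ a, ∑ bb, w (a, bb) = 1 := by
    intro a
    have h1 : ∀ bb, w (a, bb) = ‖⟪ψ bb, φ a⟫_ℂ‖ ^ 2 := by
      intro bb; rw [hwdef]; simp only; rw [norm_inner_symm]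
    simp only [h1]
    rw [aux_parseval ψ (φ a), φ.orthonormal.1 a, one_pow]
  have hsum_a : ∀ bb, ∑ a, w (a, bb) = 1 := by
    intro bb
    rw [show (fun a => w (a, bb)) = fun a => ‖⟪φ a, ψ bb⟫_ℂ‖ ^ 2 from rfl]
    rw [aux_parseval φ (ψ bb), ψ.orthonormal.1 bb, one_pow]
  have hsums : ∑ x, s x.2 * w x = 1 := by
    rw [Fintype.sum_prod_type, Finset.sum_comm]
    have : ∀ bb, ∑ a, s bb * w (a, bb) = s bb := by
      intro bb; rw [← Finset.mul_sum, hsum_a bb, mul_one]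
    simp only [this]; exact hs1
  have hsumP : ∑ x, P x = 1 := by
    simp only [hP']
    rw [Fintype.sum_prod_type]
    have : ∀ a, ∑ bb, r a * w (a, bb) = r a := by
      intro a; rw [← Finset.mul_sum, hsum_b a, mul_one]
    simp only [this]; exact hr1
  have hr1' : ∀ a, r a ≤ 1 := fun a =>
    hr1 ▸ Finset.single_le_sum (fun i _ => hr i) (mem_univ a)
  -- per-term structure
  have hfacts : ∀ x : Fin d × Fin d, P x ≠ 0 → 0 < r x.1 ∧ 0 < w x ∧ 0 < s x.2 := by
    intro x hx
    have hs0 : 0 < s x.2 := lt_of_lt_of_le hlam (hslam x.2)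
    rw [hP' x] at hx
    have h1 : r x.1 ≠ 0 := fun h => hx (by rw [h, zero_mul])
    have h2 : w x ≠ 0 := fun h => hx (by rw [h, mul_zero])
    exact ⟨(hr _).lt_of_ne (Ne.symm h1), (hwnn _).lt_of_ne (Ne.symm h2), hs0⟩
  have hterm_eq : ∀ (x : Fin d × Fin d) (u : ℝ), P x ≠ 0 →
      P x * Real.exp (u * Real.log (P x / Q x)) = r x.1 * w x * (r x.1 / s x.2) ^ u := by
    intro x u hx
    obtain ⟨hr0, hw0, hs0⟩ := hfacts x hx
    have hPQ : P x / Q x = r x.1 / s x.2 := by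
      rw [hP' x, hQ' x, mul_div_mul_right _ _ hw0.ne']
    rw [hPQ, mul_comm u, ← Real.rpow_def_of_pos (div_pos hr0 hs0), hP' x]
  have hvΛ : ∀ x : Fin d × Fin d, P x ≠ 0 → r x.1 / s x.2 ≤ lam⁻¹ := by
    intro x hx
    rw [← one_div]
    exact div_le_div₀ (by norm_num) (hr1' _) hlam (hslam _)
  -- upper bound on the mgf
  have hub : ∀ u : ℝ, |u| ≤ 1 → nsMgf P Q u ≤ lam⁻¹^2 := by
    intro u hu
    obtain ⟨hu1, hu2⟩ := abs_le.mp hu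
    have hstep : ∀ x : Fin d × Fin d,
        P x * Real.exp (u * Real.log (P x / Q x)) ≤ lam⁻¹^2 * (s x.2 * w x) := by
      intro x
      rcases eq_or_ne (P x) 0 with h0 | h0
      · rw [h0, zero_mul]
        have hs0 : 0 < s x.2 := lt_of_lt_of_le hlam (hslam x.2)
        positivity
      · obtain ⟨hr0, hw0, hs0⟩ := hfacts x h0
        rw [hterm_eq x u h0]
        set v := r x.1 / s x.2 with hvdef
        have hv0 : 0 < v := div_pos hr0 hs0
        have hvpow : v ^ (u+1) ≤ lam⁻¹^2 := by
          rcases le_or_gt v 1 with h1 | h1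
          · exact (Real.rpow_le_one hv0.le h1 (by linarith)).trans (one_le_pow₀ hΛ1)
          · calc v ^ (u+1) ≤ v ^ (2:ℝ) :=
                  Real.rpow_le_rpow_of_exponent_le h1.le (by linarith)
              _ ≤ lam⁻¹ ^ (2:ℝ) := Real.rpow_le_rpow hv0.le (hvΛ x h0) (by norm_num)
              _ = lam⁻¹^2 := by
                  rw [show ((2:ℝ) = ((2:ℕ):ℝ)) by norm_num, Real.rpow_natCast]
        have hrv : r x.1 = v * s x.2 := by
          rw [hvdef, div_mul_cancel₀ _ hs0.ne']
        calc r x.1 * w x * v ^ u = (v ^ (u+1) * s x.2) * w x := by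
              rw [Real.rpow_add_one hv0.ne', hrv]; ring
          _ ≤ (lam⁻¹^2 * s x.2) * w x := by
              refine mul_le_mul_of_nonneg_right (mul_le_mul_of_nonneg_right hvpow hs0.le) (hwnn x)
          _ = lam⁻¹^2 * (s x.2 * w x) := by ring
    calc nsMgf P Q u ≤ ∑ x, lam⁻¹^2 * (s x.2 * w x) := Finset.sum_le_sum fun x _ => hstep x
      _ = lam⁻¹^2 := by rw [← Finset.mul_sum, hsums, mul_one]
  -- lower bound on the mgf
  have hlb : ∀ u : ℝ, |u| ≤ 3/4 → m₀ ≤ nsMgf P Q u := by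
    intro u hu
    obtain ⟨hu1, hu2⟩ := abs_le.mp hu
    rcases le_or_gt u 0 with hu0 | hu0
    · -- each term ≥ lam * P x
      have hstep : ∀ x : Fin d × Fin d,
          lam * P x ≤ P x * Real.exp (u * Real.log (P x / Q x)) := by
        intro x
        rcases eq_or_ne (P x) 0 with h0 | h0
        · rw [h0, zero_mul, mul_zero]
        · obtain ⟨hr0, hw0, hs0⟩ := hfacts x h0
          rw [hterm_eq x u h0]
          set v := r x.1 / s x.2 with hvdef
          have hv0 : 0 < v := div_pos hr0 hs0
          have h1 : lam ^ (1:ℝ) ≤ lam ^ (-u) :=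
            Real.rpow_le_rpow_of_exponent_ge hlam hlam1 (by linarith)
          have h2 : lam ^ (-u) = (lam⁻¹) ^ u := by
            rw [Real.inv_rpow hlam.le, ← Real.rpow_neg hlam.le]
          have h3 : (lam⁻¹) ^ u ≤ v ^ u :=
            Real.rpow_le_rpow_of_nonpos hv0 (hvΛ x h0) hu0
          have hlamv : lam ≤ v ^ u := by
            rw [← Real.rpow_one lam]; exact h1.trans (h2 ▸ h3)
          calc lam * P x = P x * lam := by ring
            _ ≤ P x * v ^ u := mul_le_mul_of_nonneg_left hlamv (hPnn x)
            _ = r x.1 * w x * v ^ u := by rw [hP' x]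
      calc m₀ ≤ lam := hm₀lam
        _ = lam * ∑ x, P x := by rw [hsumP, mul_one]
        _ = ∑ x, lam * P x := by rw [Finset.mul_sum]
        _ ≤ nsMgf P Q u := Finset.sum_le_sum fun x _ => hstep x
    · -- pick a big entry
      obtain ⟨a₀, -, ha₀⟩ := Finset.exists_le_of_sum_le (s := univ)
        (f := fun _ : Fin d => (d:ℝ)⁻¹) (g := r) univ_nonempty
        (by rw [Finset.sum_const, card_univ, Fintype.card_fin, nsmul_eq_mul,
          mul_inv_cancel₀ (by positivity : (d:ℝ) ≠ 0), hr1])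
      obtain ⟨b₀, -, hb₀⟩ := Finset.exists_le_of_sum_le (s := univ)
        (f := fun _ : Fin d => (d:ℝ)⁻¹) (g := fun bb => w (a₀, bb)) univ_nonempty
        (by rw [Finset.sum_const, card_univ, Fintype.card_fin, nsmul_eq_mul,
          mul_inv_cancel₀ (by positivity : (d:ℝ) ≠ 0), hsum_b])
      have hdinv : (0:ℝ) < (d:ℝ)⁻¹ := by positivity
      have hrpos : 0 < r a₀ := lt_of_lt_of_le hdinv ha₀
      have hwpos : 0 < w (a₀, b₀) := lt_of_lt_of_le hdinv hb₀
      have hP0 : P (a₀, b₀) ≠ 0 := by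
        rw [hP' _]; exact (mul_pos hrpos hwpos).ne'
      have hs0 : 0 < s b₀ := lt_of_lt_of_le hlam (hslam b₀)
      set v := r a₀ / s b₀ with hvdef
      have hv0 : 0 < v := div_pos hrpos hs0
      have hsle1 : s b₀ ≤ 1 := hs1 ▸ Finset.single_le_sum (fun i _ => hs i) (mem_univ b₀)
      have hrv : r a₀ ≤ v := by
        rw [hvdef, le_div_iff₀ hs0]
        exact mul_le_of_le_one_right (hr a₀) hsle1
      have hvd : (d:ℝ)⁻¹ ≤ v := le_trans ha₀ hrv
      have hvu : (d:ℝ)⁻¹ ≤ v ^ u := by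
        rcases le_or_gt 1 v with h1 | h1
        · exact le_trans (inv_le_one_of_one_le₀ hd1) (Real.one_le_rpow h1 hu0.le)
        · have h2 : v ^ (1:ℝ) ≤ v ^ u :=
            Real.rpow_le_rpow_of_exponent_ge hv0 h1.le (by linarith)
          rw [Real.rpow_one] at h2
          exact le_trans hvd h2
      have hterm : m₀ ≤ P (a₀,b₀) * Real.exp (u * Real.log (P (a₀,b₀) / Q (a₀,b₀))) := by
        rw [hterm_eq _ u hP0]
        have hd3 : ((d:ℝ)^3)⁻¹ = (d:ℝ)⁻¹ * (d:ℝ)⁻¹ * (d:ℝ)⁻¹ := by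
          rw [show (d:ℝ)^3 = (d:ℝ)*(d:ℝ)*(d:ℝ) by ring, mul_inv, mul_inv]
        calc m₀ = lam * ((d:ℝ)^3)⁻¹ := hm₀def
          _ ≤ ((d:ℝ)^3)⁻¹ := mul_le_of_le_one_left (by positivity) hlam1
          _ = (d:ℝ)⁻¹ * (d:ℝ)⁻¹ * (d:ℝ)⁻¹ := hd3
          _ ≤ r a₀ * w (a₀,b₀) * v ^ u := by
              refine mul_le_mul (mul_le_mul ha₀ hb₀ hdinv.le (hr a₀)) hvu hdinv.le ?_
              exact mul_nonneg (hr a₀) (hwnn _)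
      refine le_trans hterm (Finset.single_le_sum
        (f := fun x => P x * Real.exp (u * Real.log (P x / Q x)))
        (fun x _ => mul_nonneg (hPnn x) (Real.exp_pos _).le) (mem_univ (a₀,b₀)))
  -- bound on all derivatives of the mgf
  have hderivb : ∀ j, j ≤ k → ∀ u : ℝ, |u| ≤ 3/4 →
      |iteratedDeriv j (nsMgf P Q) u| ≤ 2 * (Nat.factorial k : ℝ) * 8^k * lam⁻¹^2 := by
    intro j hj u hu
    obtain ⟨hu1, hu2⟩ := abs_le.mp hu
    rw [nsMgf_iteratedDeriv]
    have habs : ∀ x : Fin d × Fin d,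
        |P x * (Real.log (P x / Q x)) ^ j * Real.exp (u * Real.log (P x / Q x))|
        ≤ (Nat.factorial j : ℝ) * 8^j * (P x * Real.exp ((u + 8⁻¹) * Real.log (P x / Q x))
            + P x * Real.exp ((u - 8⁻¹) * Real.log (P x / Q x))) := by
      intro x
      set c := Real.log (P x / Q x) with hcdef
      rw [abs_mul, abs_mul, abs_of_nonneg (hPnn x), abs_of_nonneg (Real.exp_pos _).le, abs_pow]
      have h1 := aux_abs_pow_le j c
      have e1 : Real.exp ((u + 8⁻¹) * c) = Real.exp (c / 8) * Real.exp (u * c) := by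
        rw [← Real.exp_add]; congr 1; ring
      have e2 : Real.exp ((u - 8⁻¹) * c) = Real.exp (-c / 8) * Real.exp (u * c) := by
        rw [← Real.exp_add]; congr 1; ring
      calc P x * |c| ^ j * Real.exp (u * c)
          ≤ P x * ((Nat.factorial j : ℝ) * 8^j * (Real.exp (c/8) + Real.exp (-c/8)))
              * Real.exp (u * c) := by
            exact mul_le_mul_of_nonneg_right (mul_le_mul_of_nonneg_left h1 (hPnn x))
              (Real.exp_pos _).le
        _ = (Nat.factorial j : ℝ) * 8^j * (P x * Real.exp ((u + 8⁻¹) * c)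
              + P x * Real.exp ((u - 8⁻¹) * c)) := by
            rw [e1, e2]; ring
    have g1 : nsMgf P Q (u + 8⁻¹) ≤ lam⁻¹^2 :=
      hub _ (abs_le.mpr ⟨by linarith, by linarith⟩)
    have g2 : nsMgf P Q (u - 8⁻¹) ≤ lam⁻¹^2 :=
      hub _ (abs_le.mpr ⟨by linarith, by linarith⟩)
    calc |∑ x, P x * (Real.log (P x / Q x)) ^ j * Real.exp (u * Real.log (P x / Q x))|
        ≤ ∑ x, |P x * (Real.log (P x / Q x)) ^ j * Real.exp (u * Real.log (P x / Q x))| :=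
          Finset.abs_sum_le_sum_abs _ _
      _ ≤ ∑ x, (Nat.factorial j : ℝ) * 8^j * (P x * Real.exp ((u + 8⁻¹) * Real.log (P x / Q x))
            + P x * Real.exp ((u - 8⁻¹) * Real.log (P x / Q x))) :=
          Finset.sum_le_sum fun x _ => habs x
      _ = (Nat.factorial j : ℝ) * 8^j * (nsMgf P Q (u + 8⁻¹) + nsMgf P Q (u - 8⁻¹)) := by
          rw [← Finset.mul_sum, Finset.sum_add_distrib]; rfl
      _ ≤ (Nat.factorial j : ℝ) * 8^j * (lam⁻¹^2 + lam⁻¹^2) :=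
          mul_le_mul_of_nonneg_left (add_le_add g1 g2) (by positivity)
      _ ≤ 2 * (Nat.factorial k : ℝ) * 8^k * lam⁻¹^2 := by
          have hf : (Nat.factorial j : ℝ) ≤ (Nat.factorial k : ℝ) := by
            exact_mod_cast Nat.factorial_le hj
          have hp : (8:ℝ)^j ≤ 8^k := pow_le_pow_right₀ (by norm_num) hj
          calc (Nat.factorial j : ℝ) * 8^j * (lam⁻¹^2 + lam⁻¹^2)
              = (Nat.factorial j : ℝ) * 8^j * (2*lam⁻¹^2) := by ring
            _ ≤ (Nat.factorial k : ℝ) * 8^k * (2*lam⁻¹^2) := by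
                refine mul_le_mul_of_nonneg_right
                  (mul_le_mul hf hp (by positivity) (by positivity)) (by positivity)
            _ = 2 * (Nat.factorial k : ℝ) * 8^k * lam⁻¹^2 := by ring
  -- composition via the Faa di Bruno bound
  set S : Set ℝ := Set.Ioo (-(3/4) : ℝ) (3/4) with hSdef
  set T : Set ℝ := Set.Ioo (m₀/2) (lam⁻¹^2 + 1) with hTdef
  have hSopen : IsOpen S := isOpen_Ioo
  have hTopen : IsOpen T := isOpen_Ioo
  have htS : t ∈ S := by
    obtain ⟨h1, h2⟩ := abs_le.mp ht
    exact ⟨by linarith, by linarith⟩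
  have hmaps : Set.MapsTo (nsMgf P Q) S T := by
    intro u hu
    obtain ⟨h1, h2⟩ := hu
    have hu34 : |u| ≤ 3/4 := abs_le.mpr ⟨by linarith, by linarith⟩
    constructor
    · exact lt_of_lt_of_le (by linarith) (hlb u hu34)
    · exact lt_of_le_of_lt (hub u (abs_le.mpr ⟨by linarith, by linarith⟩)) (by linarith)
  have hTsub : T ⊆ {(0:ℝ)}ᶜ := by
    intro y hy
    have h0 : 0 < y := lt_of_le_of_lt (by positivity : (0:ℝ) ≤ m₀/2) hy.1
    simpa using h0.ne'
  have hlogT : ContDiffOn ℝ (k : WithTop ℕ∞) Real.log T := Real.contDiffOn_log.mono hTsub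
  have hmS : ContDiffOn ℝ (k : WithTop ℕ∞) (nsMgf P Q) S := (nsMgf_contDiff P Q _).contDiffOn
  have hmt : nsMgf P Q t ∈ T := hmaps htS
  have hCb : ∀ i, i ≤ k → ‖iteratedFDerivWithin ℝ i Real.log T (nsMgf P Q t)‖ ≤ C1 := by
    intro i hi
    rw [iteratedFDerivWithin_of_isOpen i hTopen hmt, norm_iteratedFDeriv_eq_norm_iteratedDeriv,
        Real.norm_eq_abs]
    obtain ⟨hy1, hy2⟩ := hmt
    have hy0 : 0 < nsMgf P Q t := lt_of_le_of_lt (by positivity : (0:ℝ) ≤ m₀/2) hy1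
    have hfa : (0:ℝ) ≤ (Nat.factorial (k-1) : ℝ) * ((m₀/2)^k)⁻¹ := by positivity
    match i, hi with
    | 0, _ =>
      rw [iteratedDeriv_zero]
      have hl1 : Real.log (nsMgf P Q t) ≤ Real.log (lam⁻¹^2+1) := Real.log_le_log hy0 hy2.le
      have hl2 : Real.log (m₀/2) ≤ Real.log (nsMgf P Q t) :=
        Real.log_le_log (by positivity) hy1.le
      have habs : |Real.log (nsMgf P Q t)| ≤ |Real.log (m₀/2)| + |Real.log (lam⁻¹^2+1)| := by
        rw [abs_le]
        constructor
        · have h := neg_abs_le (Real.log (m₀/2))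
          have h2 := abs_nonneg (Real.log (lam⁻¹^2+1))
          linarith
        · have h := le_abs_self (Real.log (lam⁻¹^2+1))
          have h2 := abs_nonneg (Real.log (m₀/2))
          linarith
      rw [hC1def]; linarith
    | (j+1), hi =>
      rw [aux_iteratedDeriv_log j _ hy0]
      have hjk : j + 1 ≤ k := hi
      have hyp : (m₀/2)^k ≤ (nsMgf P Q t) ^ (j+1) := by
        calc (m₀/2)^k ≤ (m₀/2)^(j+1) :=
              pow_le_pow_of_le_one (by positivity) (by linarith) hjk
          _ ≤ (nsMgf P Q t) ^ (j+1) := pow_le_pow_left₀ (by positivity) hy1.le _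
      have e2 : |(nsMgf P Q t) ^ (-(j+1) : ℤ)| = ((nsMgf P Q t) ^ (j+1))⁻¹ := by
        rw [zpow_neg, abs_inv]
        congr 1
        rw [show ((j:ℤ)+1) = ((j+1 : ℕ) : ℤ) by push_cast; ring, zpow_natCast]
        exact abs_of_nonneg (by positivity)
      rw [abs_mul, abs_mul, e2]
      have e1 : |(-1:ℝ)^j| = 1 := by rw [abs_pow, abs_neg, abs_one, one_pow]
      rw [e1, one_mul, Nat.abs_cast]
      have hfle : (Nat.factorial j : ℝ) ≤ (Nat.factorial (k-1) : ℝ) := by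
        exact_mod_cast Nat.factorial_le (by omega : j ≤ k - 1)
      have hinv : ((nsMgf P Q t) ^ (j+1))⁻¹ ≤ ((m₀/2)^k)⁻¹ := by
        apply inv_anti₀ (by positivity) hyp
      have : (Nat.factorial j : ℝ) * ((nsMgf P Q t) ^ (j+1))⁻¹
          ≤ (Nat.factorial (k-1) : ℝ) * ((m₀/2)^k)⁻¹ :=
        mul_le_mul hfle hinv (by positivity) (by positivity)
      rw [hC1def]
      have h2 := abs_nonneg (Real.log (m₀/2))
      have h3 := abs_nonneg (Real.log (lam⁻¹^2+1))
      linarith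
  have hDb : ∀ i, 1 ≤ i → i ≤ k → ‖iteratedFDerivWithin ℝ i (nsMgf P Q) S t‖ ≤ Dc ^ i := by
    intro i h1 h2
    rw [iteratedFDerivWithin_of_isOpen i hSopen htS, norm_iteratedFDeriv_eq_norm_iteratedDeriv,
        Real.norm_eq_abs]
    have ht34 : |t| ≤ 3/4 := by
      obtain ⟨ha, hb⟩ := abs_le.mp ht; exact abs_le.mpr ⟨by linarith, by linarith⟩
    have hb := hderivb i h2 t ht34
    have hpos : (0:ℝ) ≤ 2 * (Nat.factorial k : ℝ) * 8^k * lam⁻¹^2 := by positivity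
    have hDc1 : (1:ℝ) ≤ Dc := by rw [hDcdef]; linarith
    calc |iteratedDeriv i (nsMgf P Q) t| ≤ 2 * (Nat.factorial k : ℝ) * 8^k * lam⁻¹^2 := hb
      _ ≤ Dc := by rw [hDcdef]; linarith
      _ ≤ Dc ^ i := le_self_pow₀ (by linarith) (by omega)
  have hcomp := norm_iteratedFDerivWithin_comp_le hlogT hmS (le_refl (k : WithTop ℕ∞))
    hTopen.uniqueDiffOn hSopen.uniqueDiffOn hmaps htS hCb hDb
  have hfin : nsCgf P Q = Real.log ∘ nsMgf P Q := rfl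
  rw [← Real.norm_eq_abs, hfin, ← norm_iteratedFDeriv_eq_norm_iteratedDeriv,
    ← iteratedFDerivWithin_of_isOpen k hSopen htS]
  exact hcomp
end
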